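/- arXiv:2208.00670 — 10 statements merged into one kernel-verified Lean document; each statement's English description precedes it below -/
import Mathlib

section
/- If there exists a 3-(v,k,1) design with 3 ≤ k < v, then v ≥ k² - 3k + 4; in particular k ≤ ⌊√v⌋ + 2. -/
/-!
Fix a block `B`, a point `p ∈ B` and a point `x ∉ B`. For every `q ∈ B \ {p}` the triple
`{x, p, q}` lies in a block through `x` and `p`, and such a block meets `B` in at most two points,
one of which is `p`; so at least `k - 1` blocks pass through `x` and `p`. Outside `{x, p}` these
blocks are pairwise disjoint, since two of them sharing a third point would coincide. Counting the
points outside `{x, p}` gives `(k - 1)(k - 2) ≤ v - 2`, which is `k² - 3k + 4 ≤ v`.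
-/

open Finset

section TripleDesign

variable {P : Type*} [DecidableEq P] {𝓑 : Finset (Finset P)}

def blocksThrough (𝓑 : Finset (Finset P)) (s : Finset P) : Finset (Finset P) :=
  𝓑.filter (s ⊆ ·)

theorem eq_of_three_le_card_inter (hpack : ∀ s : Finset P, #s = 3 → #(blocksThrough 𝓑 s) ≤ 1)
    {b₁ b₂ : Finset P} (hb₁ : b₁ ∈ 𝓑) (hb₂ : b₂ ∈ 𝓑) (h : 3 ≤ #(b₁ ∩ b₂)) : b₁ = b₂ := by
  obtain ⟨s, hs, hcard⟩ := exists_subset_card_eq h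
  exact card_le_one.1 (hpack s hcard) b₁ (mem_filter.2 ⟨hb₁, hs.trans inter_subset_left⟩)
    b₂ (mem_filter.2 ⟨hb₂, hs.trans inter_subset_right⟩)

theorem mem_blocksThrough_pair {x p : P} {b : Finset P} :
    b ∈ blocksThrough 𝓑 {x, p} ↔ b ∈ 𝓑 ∧ x ∈ b ∧ p ∈ b := by
  simp only [blocksThrough, mem_filter, insert_subset_iff, singleton_subset_iff]

theorem pairwiseDisjoint_sdiff_pair
    (hpack : ∀ s : Finset P, #s = 3 → #(blocksThrough 𝓑 s) ≤ 1) {x p : P} (hxp : x ≠ p) :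
    (blocksThrough 𝓑 {x, p} : Set (Finset P)).PairwiseDisjoint (· \ {x, p}) := by
  intro b₁ hb₁ b₂ hb₂ hne
  rw [Function.onFun, disjoint_left]
  intro y hy₁ hy₂
  obtain ⟨hb₁, hx₁, hp₁⟩ := mem_blocksThrough_pair.1 hb₁
  obtain ⟨hb₂, hx₂, hp₂⟩ := mem_blocksThrough_pair.1 hb₂
  simp only [mem_sdiff, mem_insert, mem_singleton, not_or] at hy₁ hy₂
  obtain ⟨hy₁, hyx, hyp⟩ := hy₁
  have htriple : #({x, p, y} : Finset P) = 3 :=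
    card_eq_three.2 ⟨x, p, y, hxp, Ne.symm hyx, Ne.symm hyp, rfl⟩
  refine hne (eq_of_three_le_card_inter hpack hb₁ hb₂ ?_)
  calc 3 = #({x, p, y} : Finset P) := htriple.symm
    _ ≤ #(b₁ ∩ b₂) := card_le_card (by grind)

theorem card_blocksThrough_pair_mul_le [Fintype P] {k : ℕ}
    (hpack : ∀ s : Finset P, #s = 3 → #(blocksThrough 𝓑 s) ≤ 1)
    (hblocks : ∀ b ∈ 𝓑, #b = k) {x p : P} (hxp : x ≠ p) :
    #(blocksThrough 𝓑 {x, p}) * (k - 2) ≤ Fintype.card P - 2 := by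
  set F := blocksThrough 𝓑 {x, p}
  have hsize : ∀ b ∈ F, #(b \ {x, p}) = k - 2 := fun b hb => by
    rw [card_sdiff_of_subset (mem_filter.1 hb).2, hblocks b (mem_filter.1 hb).1, card_pair hxp]
  calc #F * (k - 2) = ∑ b ∈ F, #(b \ {x, p}) := by
        rw [sum_congr rfl hsize, sum_const, smul_eq_mul]
    _ = #(F.biUnion (· \ {x, p})) := (card_biUnion (pairwiseDisjoint_sdiff_pair hpack hxp)).symm
    _ ≤ #({x, p}ᶜ) := card_le_card fun y hy => by
        obtain ⟨b, -, hyb⟩ := mem_biUnion.1 hy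
        exact mem_compl.2 (mem_sdiff.1 hyb).2
    _ = Fintype.card P - 2 := by rw [card_compl, card_pair hxp]

theorem card_sub_one_le_card_blocksThrough_pair
    (hpack : ∀ s : Finset P, #s = 3 → #(blocksThrough 𝓑 s) ≤ 1)
    (hcover : ∀ s : Finset P, #s = 3 → (blocksThrough 𝓑 s).Nonempty)
    {B : Finset P} (hB : B ∈ 𝓑) {x p : P} (hx : x ∉ B) (hp : p ∈ B) :
    #B - 1 ≤ #(blocksThrough 𝓑 {x, p}) := by
  set F := blocksThrough 𝓑 {x, p}
  have hxp : x ≠ p := ne_of_mem_of_not_mem hp hx |>.symm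
  have hcov : B.erase p ⊆ F.biUnion (fun b => (b ∩ B).erase p) := by
    intro q hq
    obtain ⟨hqp, hqB⟩ := mem_erase.1 hq
    have hxq : x ≠ q := ne_of_mem_of_not_mem hqB hx |>.symm
    obtain ⟨b, hb⟩ := hcover {x, p, q} (card_eq_three.2 ⟨x, p, q, hxp, hxq, Ne.symm hqp, rfl⟩)
    simp only [blocksThrough, mem_filter, insert_subset_iff, singleton_subset_iff] at hb
    exact mem_biUnion.2 ⟨b, mem_blocksThrough_pair.2 ⟨hb.1, hb.2.1, hb.2.2.1⟩,
      mem_erase.2 ⟨hqp, mem_inter.2 ⟨hb.2.2.2, hqB⟩⟩⟩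
  have hsmall : ∀ b ∈ F, #((b ∩ B).erase p) ≤ 1 := by
    intro b hb
    obtain ⟨hb, hxb, hpb⟩ := mem_blocksThrough_pair.1 hb
    have hinter : #(b ∩ B) ≤ 2 := by
      by_contra! h
      exact hx (eq_of_three_le_card_inter hpack hb hB h ▸ hxb)
    rw [card_erase_of_mem (mem_inter.2 ⟨hpb, hp⟩)]
    omega
  calc #B - 1 = #(B.erase p) := (card_erase_of_mem hp).symm
    _ ≤ #(F.biUnion (fun b => (b ∩ B).erase p)) := card_le_card hcov
    _ ≤ #F * 1 := card_biUnion_le_card_mul _ _ _ hsmall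
    _ = #F := mul_one _

end TripleDesign

theorem sq_sub_three_mul_add_four_le_and_le_sqrt_add_two {k v : ℕ} (hk : 3 ≤ k)
    (h : (k - 1) * (k - 2) ≤ v - 2) : k ^ 2 - 3 * k + 4 ≤ v ∧ k ≤ Nat.sqrt v + 2 := by
  obtain ⟨n, rfl⟩ : ∃ n, k = n + 2 := ⟨k - 2, by omega⟩
  rw [show n + 2 - 1 = n + 1 by omega, Nat.add_sub_cancel] at h
  have hsq : (n + 2) ^ 2 + 2 = 3 * (n + 2) + (n + 1) * n := by ring
  have hn : n ^ 2 ≤ (n + 1) * n := by nlinarith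
  have hn2 : 2 ≤ (n + 1) * n := by nlinarith
  exact ⟨by omega, by have := Nat.le_sqrt'.2 (show n ^ 2 ≤ v by omega); omega⟩

/-- If a `3`-`(v,k,1)` design with `3 ≤ k < v` exists, then `v ≥ k² - 3k + 4`;
in particular `k ≤ ⌊√v⌋ + 2`. -/
theorem design_v_ge
    (P : Type*) [Fintype P] [DecidableEq P]
    (𝓑 : Finset (Finset P)) (v k : ℕ)
    (hv : Fintype.card P = v)
    (hk3 : 3 ≤ k) (hkv : k < v)
    (hblocks : ∀ b ∈ 𝓑, b.card = k)
    (hdesign : ∀ s : Finset P, s.card = 3 →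
      (𝓑.filter (fun b => s ⊆ b)).card = 1) :
    k ^ 2 - 3 * k + 4 ≤ v ∧ k ≤ Nat.sqrt v + 2 := by
  have hpack : ∀ s : Finset P, #s = 3 → #(blocksThrough 𝓑 s) ≤ 1 := fun s hs => (hdesign s hs).le
  have hcover : ∀ s : Finset P, #s = 3 → (blocksThrough 𝓑 s).Nonempty := fun s hs =>
    card_pos.1 ((hdesign s hs).symm ▸ one_pos)
  obtain ⟨s, -, hs⟩ := exists_subset_card_eq
    (show 3 ≤ #(univ : Finset P) by rw [card_univ]; omega)
  obtain ⟨B, hB⟩ := hcover s hs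
  have hB𝓑 : B ∈ 𝓑 := (mem_filter.1 hB).1
  have hBk : #B = k := hblocks B hB𝓑
  obtain ⟨x, hx⟩ : ∃ x, x ∉ B := by
    by_contra! h
    rw [eq_univ_iff_forall.2 h, card_univ] at hBk
    omega
  obtain ⟨p, hp⟩ : B.Nonempty := card_pos.1 (by omega)
  have hxp : x ≠ p := ne_of_mem_of_not_mem hp hx |>.symm
  refine sq_sub_three_mul_add_four_le_and_le_sqrt_add_two hk3 ?_
  calc (k - 1) * (k - 2) ≤ #(blocksThrough 𝓑 {x, p}) * (k - 2) := by
        rw [← hBk]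
        exact Nat.mul_le_mul_right _
          (card_sub_one_le_card_blocksThrough_pair hpack hcover hB𝓑 hx hp)
    _ ≤ v - 2 := hv ▸ card_blocksThrough_pair_mul_le hpack hblocks hxp
end

section
/- Let v, k, c be positive integers with 3 < k < v such that v ≥ k² - 3k + 4 and (v-1)(v-2) ≤ c·k(k-1)(k-2). Then v < (c+2)². -/
/-- If `v, k, c` are positive integers with `3 < k < v`, `v ≥ k² - 3k + 4` and
`(v-1)(v-2) ≤ c·k(k-1)(k-2)`, then `v < (c+2)²`. -/
theorem aux_inequality
    (v k c : ℕ) (hc : 0 < c) (hk : 3 < k) (hkv : k < v)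
    (h1 : k ^ 2 - 3 * k + 4 ≤ v)
    (h2 : (v - 1) * (v - 2) ≤ c * k * (k - 1) * (k - 2)) :
    v < (c + 2) ^ 2 := by
  have hk3 : 3 * k ≤ k ^ 2 := by nlinarith
  zify [show 1 ≤ k by omega, show 2 ≤ k by omega, show 1 ≤ v by omega,
    show 2 ≤ v by omega, hk3] at h1 h2 ⊢
  have hC : (1 : ℤ) ≤ c := by exact_mod_cast hc
  have hK : (4 : ℤ) ≤ k := by exact_mod_cast hk
  have hV : (k : ℤ) + 1 ≤ v := by exact_mod_cast hkv
  set V := (v : ℤ); set K := (k : ℤ); set C := (c : ℤ)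
  -- step 1: V - 1 ≤ C * K
  have step1 : V - 1 ≤ C * K := by
    have hmul : (V - 1) * ((K - 1) * (K - 2)) ≤ C * K * ((K - 1) * (K - 2)) := by
      nlinarith [sq_nonneg K]
    have hpos : (0 : ℤ) < (K - 1) * (K - 2) := by nlinarith
    exact le_of_mul_le_mul_right hmul hpos
  -- step 2: K ≤ C + 2
  have step2 : K ≤ C + 2 := by nlinarith
  nlinarith
end

section
/- Let D = (P, B) be a 3-(v,k,1) design admitting a block-transitive group G of automorphisms. Suppose g ∈ G, g ≠ 1, and the cyclic group ⟨g⟩ has an orbit on P of length at least 3. Then (v-1)(v-2)/(k(k-1)(k-2)) ≤ |G| / |C_G(g)|, where C_G(g) is the centralizer of g in G. -/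
lemma aux_desc3 (n : ℕ) : n * (n-1) * (n-2) = 6 * Nat.choose n 3 := by
  have h := Nat.descFactorial_eq_factorial_mul_choose n 3
  have h2 : n.descFactorial 3 = n * (n-1) * (n-2) := by
    simp [Nat.descFactorial_succ, Nat.descFactorial_zero]; ring
  rw [← h2, h]; norm_num [Nat.factorial]

lemma aux_orbit_pair {G P : Type*} [Group G] [MulAction G P] (g : G) (α : P)
    (h2 : g • g • α = α) : MulAction.orbit (Subgroup.zpowers g) α ⊆ {α, g • α} := by
  rintro x ⟨u, rfl⟩
  obtain ⟨m, hm⟩ := Subgroup.mem_zpowers_iff.mp u.2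
  have hu : u • α = g ^ m • α := by rw [hm]; rfl
  have hst : g ^ (2:ℤ) ∈ MulAction.stabilizer G α := by
    rw [MulAction.mem_stabilizer_iff, zpow_two, mul_smul]; exact h2
  have hq : ∀ q : ℤ, (g ^ (2:ℤ)) ^ q • α = α := fun q =>
    MulAction.mem_stabilizer_iff.mp (Subgroup.zpow_mem _ hst q)
  rcases Int.emod_two_eq m with h0 | h1
  · left
    show u • α = α
    have hm2 : m = 2 * (m / 2) := by omega
    rw [hu, hm2, zpow_mul]
    exact hq _
  · right
    show u • α ∈ ({g • α} : Set P)
    have hm2 : m = 1 + 2 * (m / 2) := by omega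
    rw [hu, hm2, zpow_add, zpow_one, mul_smul, zpow_mul]
    rw [show (g ^ (2:ℤ)) ^ (m/2) • α = α from hq _]
    exact Set.mem_singleton _

/-- If a `3`-`(v,k,1)` design admits a block-transitive automorphism group `G`
and `g ∈ G`, `g ≠ 1`, is such that `⟨g⟩` has an orbit of length `≥ 3` on points,
then `(v-1)(v-2)/(k(k-1)(k-2)) ≤ |G|/|C_G(g)|`, stated multiplicatively. -/
theorem block_transitive_centralizer_bound
    (P : Type*) [Fintype P] [DecidableEq P]
    (𝓑 : Finset (Finset P)) (v k : ℕ)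
    (hv : Fintype.card P = v)
    (hk3 : 3 ≤ k) (hkv : k ≤ v)
    (hblocks : ∀ b ∈ 𝓑, b.card = k)
    (hdesign : ∀ s : Finset P, s.card = 3 →
      (𝓑.filter (fun b => s ⊆ b)).card = 1)
    (G : Type*) [Group G] [Finite G] [MulAction G P] [FaithfulSMul G P]
    (hpres : ∀ (g : G), ∀ b ∈ 𝓑, b.image (fun x => g • x) ∈ 𝓑)
    (htrans : ∀ b₁ ∈ 𝓑, ∀ b₂ ∈ 𝓑, ∃ g : G, b₁.image (fun x => g • x) = b₂)
    (g : G) (hg : g ≠ 1)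
    (horb : ∃ α : P, 3 ≤ (MulAction.orbit (Subgroup.zpowers g) α).ncard) :
    (v - 1) * (v - 2) * Nat.card (Subgroup.centralizer ({g} : Set G)) ≤
      k * (k - 1) * (k - 2) * Nat.card G := by
  classical
  haveI : Fintype G := Fintype.ofFinite G
  obtain ⟨α, hα⟩ := horb
  -- uniqueness of the block through a 3-set
  have huniq : ∀ s : Finset P, s.card = 3 → ∀ B ∈ 𝓑, ∀ B' ∈ 𝓑,
      s ⊆ B → s ⊆ B' → B = B' := by
    intro s hs B hB B' hB' h1 h2
    obtain ⟨c, hc⟩ := Finset.card_eq_one.mp (hdesign s hs)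
    have e1 : B ∈ ({c} : Finset (Finset P)) := hc ▸ Finset.mem_filter.mpr ⟨hB, h1⟩
    have e2 : B' ∈ ({c} : Finset (Finset P)) := hc ▸ Finset.mem_filter.mpr ⟨hB', h2⟩
    rw [Finset.mem_singleton.mp e1, Finset.mem_singleton.mp e2]
  -- distinctness of α, g•α, g•g•α
  have hle2 : ({α, g • α} : Set P).ncard ≤ 2 := by
    have := Set.ncard_insert_le α ({g • α} : Set P)
    simpa using this
  have hpair : ¬ (g • g • α = α) ∧ ¬ (g • α = α) := by
    constructor <;> intro h
    · have hsub := aux_orbit_pair g α h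
      have := Set.ncard_le_ncard hsub (Set.toFinite _)
      omega
    · have hsub := aux_orbit_pair g α (by rw [h, h])
      have := Set.ncard_le_ncard hsub (Set.toFinite _)
      omega
  obtain ⟨h2α, h1α⟩ := hpair
  have hne12 : α ≠ g • α := fun h => h1α h.symm
  have hne13 : α ≠ g • g • α := fun h => h2α h.symm
  have hne23 : g • α ≠ g • g • α := fun h => hne12 (by
    have := smul_left_cancel g h; exact this)
  set s₀ : Finset P := {α, g • α, g • g • α} with hs₀
  have hs₀card : s₀.card = 3 :=
    Finset.card_eq_three.mpr ⟨α, g • α, g • g • α, hne12, hne13, hne23, rfl⟩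
  -- the base block B₀
  obtain ⟨B₀, hB₀⟩ := Finset.card_eq_one.mp (hdesign s₀ hs₀card)
  have hB₀mem : B₀ ∈ 𝓑.filter (fun b => s₀ ⊆ b) := hB₀ ▸ Finset.mem_singleton_self B₀
  have hB₀B : B₀ ∈ 𝓑 := (Finset.mem_filter.mp hB₀mem).1
  have hB₀s : s₀ ⊆ B₀ := (Finset.mem_filter.mp hB₀mem).2
  -- choose a group element for each block
  choose! a ha using htrans B₀ hB₀B
  -- the conjugacy class as a finset
  set cl : Finset G := Finset.univ.image (fun u : G => u * g * u⁻¹) with hcl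
  -- injection of blocks into P × cl
  have hmaps : ∀ B ∈ 𝓑, (a B • α, a B * g * (a B)⁻¹) ∈ Finset.univ ×ˢ cl := by
    intro B hB
    exact Finset.mem_product.mpr ⟨Finset.mem_univ _,
      Finset.mem_image.mpr ⟨a B, Finset.mem_univ _, rfl⟩⟩
  have key3 : ∀ w : G, s₀.image (fun x => w • x) =
      {w • α, (w * g * w⁻¹) • (w • α), (w * g * w⁻¹) • ((w * g * w⁻¹) • (w • α))} := by
    intro w
    have e1 : (w * g * w⁻¹) • (w • α) = w • (g • α) := by
      rw [smul_smul, inv_mul_cancel_right, mul_smul]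
    have e2 : (w * g * w⁻¹) • ((w * g * w⁻¹) • (w • α)) = w • (g • g • α) := by
      rw [e1, smul_smul, inv_mul_cancel_right, mul_smul]
    rw [e2, e1, hs₀]
    simp [Finset.image_insert]
  have hinj : Set.InjOn (fun B => (a B • α, a B * g * (a B)⁻¹)) ↑𝓑 := by
    intro B hB B' hB' heq
    simp only [Prod.mk.injEq] at heq
    obtain ⟨hα', hc'⟩ := heq
    have himg : s₀.image (fun x => a B • x) = s₀.image (fun x => a B' • x) := by
      rw [key3, key3, hα', hc']
    have hsub1 : s₀.image (fun x => a B • x) ⊆ B := by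
      have h := Finset.image_subset_image (f := fun x => a B • x) hB₀s
      rwa [ha B hB] at h
    have hsub2 : s₀.image (fun x => a B • x) ⊆ B' := by
      have h := Finset.image_subset_image (f := fun x => a B' • x) hB₀s
      rw [ha B' hB'] at h
      exact himg ▸ h
    have hcard : (s₀.image (fun x => a B • x)).card = 3 := by
      rw [Finset.card_image_of_injective _ (MulAction.injective (a B)), hs₀card]
    exact huniq _ hcard B hB B' hB' hsub1 hsub2
  have hble : 𝓑.card ≤ v * cl.card := by
    have := Finset.card_le_card_of_injOn _ hmaps hinj
    rwa [Finset.card_product, Finset.card_univ, hv] at this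
  -- counting: 𝓑.card * C(k,3) = C(v,3)
  set T : Finset (Finset P) := Finset.univ.powersetCard 3 with hT
  have hckey : 𝓑.card * Nat.choose k 3 = Nat.choose v 3 := by
    have L : ∑ b ∈ 𝓑, ∑ s ∈ T, (if s ⊆ b then (1:ℕ) else 0) = 𝓑.card * Nat.choose k 3 := by
      rw [Finset.sum_congr rfl (fun b hb => ?_), Finset.sum_const, smul_eq_mul]
      have hfil : T.filter (fun s => s ⊆ b) = b.powersetCard 3 := by
        ext s
        simp only [hT, Finset.mem_filter, Finset.mem_powersetCard]
        constructor
        · rintro ⟨⟨-, h3⟩, hsb⟩; exact ⟨hsb, h3⟩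
        · rintro ⟨hsb, h3⟩; exact ⟨⟨Finset.subset_univ _, h3⟩, hsb⟩
      rw [← Finset.card_filter, hfil, Finset.card_powersetCard, hblocks b hb]
    have R : ∑ s ∈ T, ∑ b ∈ 𝓑, (if s ⊆ b then (1:ℕ) else 0) = Nat.choose v 3 := by
      rw [Finset.sum_congr rfl (fun s hs => ?_), Finset.sum_const, smul_eq_mul, mul_one,
        hT, Finset.card_powersetCard, Finset.card_univ, hv]
      rw [← Finset.card_filter]
      exact hdesign s (Finset.mem_powersetCard.mp hs).2
    rw [← L, ← R]
    exact Finset.sum_comm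
  have hcount : 𝓑.card * (k * (k-1) * (k-2)) = v * (v-1) * (v-2) := by
    rw [aux_desc3 k, aux_desc3 v, ← hckey]; ring
  -- orbit-stabilizer: cl.card * |C_G(g)| = |G|
  have horbeq : (MulAction.orbit (ConjAct G) g : Set G) = ↑cl := by
    ext x
    simp only [MulAction.mem_orbit_iff, Finset.coe_image, Set.mem_image,
      Finset.coe_univ, Set.mem_univ, true_and, hcl]
    constructor
    · rintro ⟨u, rfl⟩
      exact ⟨ConjAct.ofConjAct u, by rw [ConjAct.smul_def]⟩
    · rintro ⟨u, rfl⟩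
      exact ⟨ConjAct.toConjAct u, by rw [ConjAct.smul_def, ConjAct.ofConjAct_toConjAct]⟩
  have hnc : cl.card * Nat.card (Subgroup.centralizer ({g} : Set G)) = Nat.card G := by
    haveI : Fintype (ConjAct G) := Fintype.ofFinite _
    haveI : Fintype (MulAction.orbit (ConjAct G) g) := Fintype.ofFinite _
    haveI : Fintype (MulAction.stabilizer (ConjAct G) g) := Fintype.ofFinite _
    have hos := MulAction.card_orbit_mul_card_stabilizer_eq_card_group (ConjAct G) g
    have hcc : Nat.card (Subgroup.centralizer ({g} : Set G)) =
        Fintype.card (MulAction.stabilizer (ConjAct G) g) := by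
      rw [Subgroup.nat_card_centralizer_nat_card_stabilizer, Nat.card_eq_fintype_card]
    have hclcard : cl.card = Fintype.card (MulAction.orbit (ConjAct G) g) := by
      rw [← Nat.card_eq_fintype_card, Nat.card_coe_set_eq, horbeq, Set.ncard_coe_finset]
    rw [hclcard, hcc, hos, Nat.card_eq_fintype_card]
    exact Fintype.card_congr ConjAct.ofConjAct.toEquiv
  -- final arithmetic
  have hv0 : 0 < v := by omega
  set c := Nat.card (Subgroup.centralizer ({g} : Set G))
  refine Nat.le_of_mul_le_mul_left ?_ hv0
  calc v * ((v-1) * (v-2) * c) = (v * (v-1) * (v-2)) * c := by ring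
    _ = 𝓑.card * (k * (k-1) * (k-2)) * c := by rw [hcount]
    _ ≤ (v * cl.card) * (k * (k-1) * (k-2)) * c := by
        exact Nat.mul_le_mul_right _ (Nat.mul_le_mul_right _ hble)
    _ = v * (k * (k-1) * (k-2) * (cl.card * c)) := by ring
    _ = v * (k * (k-1) * (k-2) * Nat.card G) := by rw [hnc]
end

section
/- Let D = (P, B) be a 3-(v,k,1) design admitting a block-transitive group G of automorphisms, and let H be a nontrivial subgroup of G having an orbit on P of length at least 3. Then the number of points of P fixed by every element of H satisfies |Fix_P(H)| ≤ 2(v-k)/(k-2) + k - 2. -/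
/-!
Let `F` be the set of points fixed by `H` and `β` a point whose `H`-orbit has at least three
points. A block meeting `F` in three points is the unique block through them, hence
`H`-invariant; if it also contains `β` it contains the whole orbit of `β`. Since three points of
that orbit lie in only one block, at most one block through `β` meets `F` in more than two
points, and it has at most `k - 3` fixed points. Now fix `x ∈ F`: the `r = (v - 2)/(k - 2)`
blocks through `x` and `β` partition the other points, so counting `F \ {x}` along them gives
`|F| ≤ r + 1` or `|F| ≤ r + k - 4`. Both are at most `2(r - 1) + k - 2`, the first because
`v ≥ 4` forces `r + k ≥ 5`.
-/

open Finset MulAction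

def IsSteiner3 {P : Type*} [DecidableEq P] (𝓑 : Finset (Finset P)) : Prop :=
  ∀ s : Finset P, s.card = 3 → (𝓑.filter (fun b => s ⊆ b)).card = 1

theorem MulAction.disjoint_orbit_fixedPoints {K P : Type*} [Group K] [MulAction K P]
    {β : P} (hβ : 1 < (orbit K β).ncard) : Disjoint (orbit K β) (fixedPoints K P) := by
  refine Set.disjoint_left.2 fun γ hγ hfix => ?_
  rw [← orbit_eq_iff.2 hγ] at hβ
  have hsub := subsingleton_orbit_iff_mem_fixedPoints.2 hfix
  exact hβ.not_ge ((Set.ncard_le_one hsub.finite).2 fun a ha b hb => hsub ha hb)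

theorem MulAction.ncard_orbit_lt_card {K P : Type*} [Group K] [MulAction K P] [Finite P]
    {x β : P} (hx : x ∈ fixedPoints K P) (hβ : 1 < (orbit K β).ncard) :
    (orbit K β).ncard < Nat.card P :=
  (Set.ncard_lt_ncard (Set.ssubset_insert fun h =>
    Set.disjoint_left.1 (disjoint_orbit_fixedPoints hβ) h hx)).trans_le (Set.ncard_le_card _)

theorem card_insert_pair_eq_three {P : Type*} [DecidableEq P] {x y z : P} (hxy : x ≠ y)
    (hz : z ∉ ({x, y} : Finset P)) : #(insert z {x, y}) = 3 := by
  rw [card_insert_of_notMem hz, card_pair hxy]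

namespace IsSteiner3

variable {P : Type*} [DecidableEq P] {𝓑 : Finset (Finset P)}

theorem exists_superset (hD : IsSteiner3 𝓑) {s : Finset P} (hs : #s = 3) : ∃ b ∈ 𝓑, s ⊆ b :=
  filter_nonempty_iff.1 (card_pos.1 (by rw [hD s hs]; exact one_pos))

theorem eq_of_two_lt_card_inter (hD : IsSteiner3 𝓑) {b₁ b₂ : Finset P} (hb₁ : b₁ ∈ 𝓑)
    (hb₂ : b₂ ∈ 𝓑) (h : 2 < #(b₁ ∩ b₂)) : b₁ = b₂ := by
  obtain ⟨s, hs, hcard⟩ := exists_subset_card_eq h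
  exact card_le_one.1 (hD s hcard).le b₁ (mem_filter.2 ⟨hb₁, hs.trans inter_subset_left⟩)
    b₂ (mem_filter.2 ⟨hb₂, hs.trans inter_subset_right⟩)

theorem three_le_card_and_card_le [Fintype P] (hD : IsSteiner3 𝓑) {k : ℕ}
    (hblocks : ∀ b ∈ 𝓑, #b = k) (hP : 3 ≤ Fintype.card P) : 3 ≤ k ∧ k ≤ Fintype.card P := by
  obtain ⟨s, -, hs⟩ := exists_subset_card_eq (s := (univ : Finset P)) hP
  obtain ⟨b, hb, hsb⟩ := hD.exists_superset hs
  rw [← hblocks b hb]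
  exact ⟨hs ▸ card_le_card hsb, card_le_univ b⟩

theorem pairwiseDisjoint_inter_sdiff (hD : IsSteiner3 𝓑) {x y : P} (hxy : x ≠ y)
    (T : Finset P) :
    (𝓑.filter (fun b => {x, y} ⊆ b) : Set (Finset P)).PairwiseDisjoint
      (fun b => (b ∩ T) \ {x, y}) := by
  intro b₁ hb₁ b₂ hb₂ hne
  rw [Function.onFun, disjoint_left]
  intro z hz₁ hz₂
  rw [mem_coe, mem_filter] at hb₁ hb₂
  rw [mem_sdiff, mem_inter] at hz₁ hz₂
  have h3 := card_le_card (subset_inter (insert_subset hz₁.1.1 hb₁.2) (insert_subset hz₂.1.1 hb₂.2))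
  rw [card_insert_pair_eq_three hxy hz₁.2] at h3
  exact hne (hD.eq_of_two_lt_card_inter hb₁.1 hb₂.1 h3)

theorem sum_card_inter_sdiff (hD : IsSteiner3 𝓑) {x y : P} (hxy : x ≠ y) (T : Finset P) :
    ∑ b ∈ 𝓑.filter (fun b => {x, y} ⊆ b), #((b ∩ T) \ {x, y}) = #(T \ {x, y}) := by
  rw [← card_biUnion (hD.pairwiseDisjoint_inter_sdiff hxy T)]
  congr 1
  ext z
  simp only [mem_biUnion, mem_filter, mem_sdiff, mem_inter]
  constructor
  · rintro ⟨b, -, ⟨-, hzT⟩, hz⟩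
    exact ⟨hzT, hz⟩
  · rintro ⟨hzT, hz⟩
    obtain ⟨b, hb, hzb⟩ := hD.exists_superset (card_insert_pair_eq_three hxy hz)
    exact ⟨b, ⟨hb, (insert_subset_iff.1 hzb).2⟩, ⟨(insert_subset_iff.1 hzb).1, hzT⟩, hz⟩

theorem card_filter_pair_subset_mul [Fintype P] (hD : IsSteiner3 𝓑) {k : ℕ}
    (hblocks : ∀ b ∈ 𝓑, #b = k) {x y : P} (hxy : x ≠ y) :
    #(𝓑.filter (fun b => {x, y} ⊆ b)) * (k - 2) = Fintype.card P - 2 := by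
  rw [← card_univ, ← card_pair hxy, ← card_sdiff_of_subset (subset_univ _),
    ← hD.sum_card_inter_sdiff hxy univ, sum_const_nat]
  intro b hb
  rw [mem_filter] at hb
  rw [inter_univ, card_sdiff_of_subset hb.2, hblocks b hb.1, card_pair hxy]

theorem sum_card_inter_add_one (hD : IsSteiner3 𝓑) {x y : P} (hxy : x ≠ y) {T : Finset P}
    (hx : x ∈ T) (hy : y ∉ T) :
    ∑ b ∈ 𝓑.filter (fun b => {x, y} ⊆ b), #(b ∩ T) + 1 =
      #(𝓑.filter (fun b => {x, y} ⊆ b)) + #T := by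
  have hU : ∀ U : Finset P, x ∈ U → y ∉ U → #(U \ {x, y}) + 1 = #U := fun U hxU hyU => by
    rw [show U \ {x, y} = U.erase x by ext z; by_cases hz : z = y <;> simp [hz, hyU, and_comm],
      card_erase_add_one hxU]
  have hterm : ∀ b ∈ 𝓑.filter (fun b => {x, y} ⊆ b), #(b ∩ T) = #((b ∩ T) \ {x, y}) + 1 :=
    fun b hb => (hU _ (mem_inter.2 ⟨(mem_filter.1 hb).2 (mem_insert_self x _), hx⟩)
      fun h => hy (mem_inter.1 h).2).symm
  rw [sum_congr rfl hterm, sum_add_distrib, hD.sum_card_inter_sdiff hxy T, sum_const, smul_eq_mul,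
    mul_one, ← hU T hx hy]
  ring

section Action

variable {K : Type*} [Monoid K] [MulAction K P]

theorem image_smul_eq_self (hD : IsSteiner3 𝓑)
    (hpres : ∀ g : K, ∀ b ∈ 𝓑, b.image (fun x => g • x) ∈ 𝓑) {b T : Finset P} (hb : b ∈ 𝓑)
    (hT : (T : Set P) ⊆ fixedPoints K P) (hbT : 2 < #(b ∩ T)) (g : K) :
    b.image (fun x => g • x) = b := by
  refine hD.eq_of_two_lt_card_inter (hpres g b hb) hb (hbT.trans_le (card_le_card fun a ha => ?_))
  obtain ⟨hab, haT⟩ := mem_inter.1 ha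
  exact mem_inter.2 ⟨mem_image.2 ⟨a, hab, hT haT g⟩, hab⟩

theorem orbit_subset (hD : IsSteiner3 𝓑)
    (hpres : ∀ g : K, ∀ b ∈ 𝓑, b.image (fun x => g • x) ∈ 𝓑) {b T : Finset P} (hb : b ∈ 𝓑)
    (hT : (T : Set P) ⊆ fixedPoints K P) (hbT : 2 < #(b ∩ T)) {β : P} (hβ : β ∈ b) :
    orbit K β ⊆ b := by
  rintro _ ⟨g, rfl⟩
  rw [mem_coe, ← hD.image_smul_eq_self hpres hb hT hbT g]
  exact mem_image_of_mem _ hβ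

theorem eq_of_mem_of_two_lt_card_inter (hD : IsSteiner3 𝓑)
    (hpres : ∀ g : K, ∀ b ∈ 𝓑, b.image (fun x => g • x) ∈ 𝓑) {b₁ b₂ T : Finset P}
    (hb₁ : b₁ ∈ 𝓑) (hb₂ : b₂ ∈ 𝓑) (hT : (T : Set P) ⊆ fixedPoints K P)
    (hb₁T : 2 < #(b₁ ∩ T)) (hb₂T : 2 < #(b₂ ∩ T)) {β : P} (hβ : 2 < (orbit K β).ncard)
    (hβ₁ : β ∈ b₁) (hβ₂ : β ∈ b₂) : b₁ = b₂ := by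
  refine hD.eq_of_two_lt_card_inter hb₁ hb₂ ?_
  rw [← Set.ncard_coe_finset, coe_inter]
  exact hβ.trans_le (Set.ncard_le_ncard (Set.subset_inter
    (hD.orbit_subset hpres hb₁ hT hb₁T hβ₁) (hD.orbit_subset hpres hb₂ hT hb₂T hβ₂)))

end Action

theorem card_inter_add_three_le {K : Type*} [Group K] [MulAction K P] (hD : IsSteiner3 𝓑)
    (hpres : ∀ g : K, ∀ b ∈ 𝓑, b.image (fun x => g • x) ∈ 𝓑) {b T : Finset P} (hb : b ∈ 𝓑)
    (hT : (T : Set P) ⊆ fixedPoints K P) (hbT : 2 < #(b ∩ T)) {β : P}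
    (hβ : 2 < (orbit K β).ncard) (hβb : β ∈ b) : #(b ∩ T) + 3 ≤ #b := by
  have hdisj : Disjoint (↑(b ∩ T) : Set P) (orbit K β) :=
    ((disjoint_orbit_fixedPoints (by omega)).mono_right hT).symm.mono_left
      (by simp [Set.inter_subset_right])
  have horb := hD.orbit_subset hpres hb hT hbT hβb
  calc #(b ∩ T) + 3 ≤ (↑(b ∩ T) : Set P).ncard + (orbit K β).ncard := by
        rw [Set.ncard_coe_finset]; omega
    _ = (↑(b ∩ T) ∪ orbit K β).ncard :=
        (Set.ncard_union_eq hdisj (finite_toSet _) (b.finite_toSet.subset horb)).symm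
    _ ≤ #b := by
        rw [← Set.ncard_coe_finset b]
        exact Set.ncard_le_ncard (Set.union_subset (coe_subset.2 inter_subset_left) horb)

theorem card_le_or_add_four_le {K : Type*} [Group K] [MulAction K P] (hD : IsSteiner3 𝓑)
    {k : ℕ} (hblocks : ∀ b ∈ 𝓑, #b = k)
    (hpres : ∀ g : K, ∀ b ∈ 𝓑, b.image (fun x => g • x) ∈ 𝓑) {T : Finset P}
    (hT : (T : Set P) ⊆ fixedPoints K P) {x β : P} (hx : x ∈ T) (hβ : 2 < (orbit K β).ncard) :
    #T ≤ #(𝓑.filter (fun b => {x, β} ⊆ b)) + 1 ∨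
      #T + 4 ≤ #(𝓑.filter (fun b => {x, β} ⊆ b)) + k := by
  have hβT : β ∉ T := fun h =>
    Set.disjoint_left.1 (disjoint_orbit_fixedPoints (by omega)) (mem_orbit_self β) (hT h)
  have hxβ : x ≠ β := by rintro rfl; exact hβT hx
  have hcount := hD.sum_card_inter_add_one hxβ hx hβT
  set S := 𝓑.filter (fun b => {x, β} ⊆ b)
  have hS : ∀ b ∈ S, b ∈ 𝓑 ∧ β ∈ b := fun b hb =>
    ⟨(mem_filter.1 hb).1, (mem_filter.1 hb).2 (mem_insert_of_mem (mem_singleton_self β))⟩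
  by_cases hspecial : ∃ b₀ ∈ S, 2 < #(b₀ ∩ T)
  · obtain ⟨b₀, hb₀, hb₀T⟩ := hspecial
    have hrest : ∀ b ∈ S.erase b₀, #(b ∩ T) ≤ 2 := fun b hb => by
      obtain ⟨hne, hbS⟩ := mem_erase.1 hb
      by_contra! h
      exact hne (hD.eq_of_mem_of_two_lt_card_inter hpres (hS b hbS).1 (hS b₀ hb₀).1 hT h hb₀T
        hβ (hS b hbS).2 (hS b₀ hb₀).2)
    have hb₀k := hD.card_inter_add_three_le hpres (hS b₀ hb₀).1 hT hb₀T hβ (hS b₀ hb₀).2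
    have hrest_sum := sum_le_card_nsmul (S.erase b₀) _ 2 hrest
    rw [← sum_erase_add S _ hb₀] at hcount
    rw [hblocks b₀ (hS b₀ hb₀).1] at hb₀k
    rw [smul_eq_mul] at hrest_sum
    have := card_erase_add_one hb₀
    omega
  · push Not at hspecial
    have hle := sum_le_card_nsmul S (fun b => #(b ∩ T)) 2 hspecial
    rw [smul_eq_mul] at hle
    omega

end IsSteiner3

theorem zero_le_two_mul_sub_div_add {k v : ℕ} (hk : 3 ≤ k) (hkv : k ≤ v) :
    (0 : ℚ) ≤ 2 * ((v : ℚ) - k) / ((k : ℚ) - 2) + k - 2 := by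
  have hk' : (3 : ℚ) ≤ k := by exact_mod_cast hk
  have hkv' : (k : ℚ) ≤ v := by exact_mod_cast hkv
  have : 0 ≤ 2 * ((v : ℚ) - k) / ((k : ℚ) - 2) := by apply div_nonneg <;> linarith
  linarith

theorem le_two_mul_sub_div_add {f r k v : ℕ} (hr : r * (k - 2) = v - 2) (hk : 3 ≤ k)
    (hv : 4 ≤ v) (hf : f ≤ r + 1 ∨ f + 4 ≤ r + k) :
    (f : ℚ) ≤ 2 * ((v : ℚ) - k) / ((k : ℚ) - 2) + k - 2 := by
  have hrk : 5 ≤ r + k := by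
    rcases Nat.lt_or_ge r 2 with h | h
    · interval_cases r <;> omega
    · omega
  have hf' : ((f + 4 : ℕ) : ℚ) ≤ ((2 * r + k : ℕ) : ℚ) := by
    exact_mod_cast (by omega : f + 4 ≤ 2 * r + k)
  have hr' : ((r * (k - 2) : ℕ) : ℚ) = ((v - 2 : ℕ) : ℚ) := congrArg _ hr
  push_cast [Nat.cast_sub (by omega : 2 ≤ k), Nat.cast_sub (by omega : 2 ≤ v)] at hf' hr'
  have hk2 : (k : ℚ) - 2 ≠ 0 := by
    rw [sub_ne_zero]; exact_mod_cast (by omega : k ≠ 2)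
  -- `2 (v - k) / (k - 2) = 2 (r - 1)`, since `v - k = (r - 1)(k - 2)`
  rw [show (v : ℚ) - k = (r - 1) * (k - 2) by linear_combination -hr', mul_div_assoc,
    mul_div_cancel_right₀ _ hk2]
  linarith

theorem block_transitive_fixed_points_bound_general
    (P : Type*) [Fintype P] [DecidableEq P]
    (𝓑 : Finset (Finset P)) (v k : ℕ)
    (hv : Fintype.card P = v)
    (hblocks : ∀ b ∈ 𝓑, b.card = k)
    (hdesign : ∀ s : Finset P, s.card = 3 →
      (𝓑.filter (fun b => s ⊆ b)).card = 1)
    (G : Type*) [Group G] [MulAction G P]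
    (hpres : ∀ (g : G), ∀ b ∈ 𝓑, b.image (fun x => g • x) ∈ 𝓑)
    (H : Subgroup G)
    (horb : ∃ α : P, 3 ≤ (MulAction.orbit H α).ncard) :
    (({α : P | ∀ h ∈ H, h • α = α}.ncard : ℚ)) ≤
      2 * ((v : ℚ) - k) / ((k : ℚ) - 2) + (k : ℚ) - 2 := by
  have hD : IsSteiner3 𝓑 := hdesign
  have hpresH : ∀ h : H, ∀ b ∈ 𝓑, b.image (fun x => h • x) ∈ 𝓑 := fun h => hpres h
  obtain ⟨β, hβ⟩ := horb
  subst hv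
  have hF : {α : P | ∀ h ∈ H, h • α = α} = (Set.toFinite (fixedPoints H P)).toFinset := by
    ext; simp
  rw [hF, Set.ncard_coe_finset]
  obtain ⟨hk3, hkv⟩ := hD.three_le_card_and_card_le hblocks
    (hβ.trans ((Set.ncard_le_card _).trans_eq Nat.card_eq_fintype_card))
  obtain hempty | ⟨x, hx⟩ := (Set.toFinite (fixedPoints H P)).toFinset.eq_empty_or_nonempty
  · rw [hempty, card_empty, Nat.cast_zero]
    exact zero_le_two_mul_sub_div_add hk3 hkv
  have hxF : x ∈ fixedPoints H P := (Set.Finite.mem_toFinset _).1 hx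
  have hxβ : x ≠ β := by
    rintro rfl
    exact Set.disjoint_left.1 (disjoint_orbit_fixedPoints (by omega)) (mem_orbit_self x) hxF
  have hv4 : 4 ≤ Fintype.card P := by
    have := ncard_orbit_lt_card (β := β) hxF (by omega)
    rw [Nat.card_eq_fintype_card] at this
    omega
  exact le_two_mul_sub_div_add (hD.card_filter_pair_subset_mul hblocks hxβ) hk3 hv4
    (hD.card_le_or_add_four_le hblocks hpresH (by simp) hx hβ)

/-- If a `3`-`(v,k,1)` design admits a block-transitive automorphism group `G`,
and `H ≤ G` is nontrivial with an orbit of length `≥ 3` on points, then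
`|Fix_P(H)| ≤ 2(v-k)/(k-2) + k - 2`. -/
theorem block_transitive_fixed_points_bound
    (P : Type*) [Fintype P] [DecidableEq P]
    (𝓑 : Finset (Finset P)) (v k : ℕ)
    (hv : Fintype.card P = v)
    (hk3 : 3 ≤ k) (hkv : k ≤ v)
    (hblocks : ∀ b ∈ 𝓑, b.card = k)
    (hdesign : ∀ s : Finset P, s.card = 3 →
      (𝓑.filter (fun b => s ⊆ b)).card = 1)
    (G : Type*) [Group G] [Finite G] [MulAction G P] [FaithfulSMul G P]
    (hpres : ∀ (g : G), ∀ b ∈ 𝓑, b.image (fun x => g • x) ∈ 𝓑)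
    (htrans : ∀ b₁ ∈ 𝓑, ∀ b₂ ∈ 𝓑, ∃ g : G, b₁.image (fun x => g • x) = b₂)
    (H : Subgroup G) (hH : H ≠ ⊥)
    (horb : ∃ α : P, 3 ≤ (MulAction.orbit H α).ncard) :
    (({α : P | ∀ h ∈ H, h • α = α}.ncard : ℚ)) ≤
      2 * ((v : ℚ) - k) / ((k : ℚ) - 2) + (k : ℚ) - 2 :=
  block_transitive_fixed_points_bound_general P 𝓑 v k hv hblocks hdesign G hpres H horb
end

section
/- Let D = (P, B) be a 3-(v,k,1) design admitting a block-transitive group G of automorphisms. If G contains an element g of order 3 fixing no point of P, then k divides v. -/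
/-- If a `3`-`(v,k,1)` design admits a block-transitive automorphism group `G`
containing an element of order `3` with no fixed point, then `k ∣ v`. -/
theorem block_transitive_order_three_free
    (P : Type*) [Fintype P] [DecidableEq P]
    (𝓑 : Finset (Finset P)) (v k : ℕ)
    (hv : Fintype.card P = v)
    (hk3 : 3 ≤ k) (hkv : k ≤ v)
    (hblocks : ∀ b ∈ 𝓑, b.card = k)
    (hdesign : ∀ s : Finset P, s.card = 3 →
      (𝓑.filter (fun b => s ⊆ b)).card = 1)
    (G : Type*) [Group G] [Finite G] [MulAction G P] [FaithfulSMul G P]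
    (hpres : ∀ (g : G), ∀ b ∈ 𝓑, b.image (fun x => g • x) ∈ 𝓑)
    (htrans : ∀ b₁ ∈ 𝓑, ∀ b₂ ∈ 𝓑, ∃ g : G, b₁.image (fun x => g • x) = b₂)
    (g : G) (hg : orderOf g = 3) (hfree : ∀ α : P, g • α ≠ α) :
    k ∣ v := by
  classical
  have hg3 : ∀ α : P, g • g • g • α = α := by
    intro α
    have h : g ^ 3 = 1 := by rw [← hg]; exact pow_orderOf_eq_one g
    have : g • g • g • α = (g * g * g) • α := by rw [mul_smul, mul_smul]
    rw [this, show g * g * g = g ^ 3 by rw [pow_succ, pow_succ, pow_one], h, one_smul]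
  have hs3 : ∀ α : P, ({α, g • α, g • g • α} : Finset P).card = 3 := by
    intro α
    have h1 : α ≠ g • α := fun h => hfree α h.symm
    have h2 : α ≠ g • g • α := by
      intro h
      apply hfree (g • g • α)
      rw [hg3]; exact h
    have h3 : g • α ≠ g • g • α := fun h => hfree (g • α) h.symm
    rw [Finset.card_insert_of_notMem (by simp [h1, h2]),
      Finset.card_insert_of_notMem (by simp [h3]), Finset.card_singleton]
  have huniq : ∀ s : Finset P, s.card = 3 → ∀ b₁ ∈ 𝓑, ∀ b₂ ∈ 𝓑,
      s ⊆ b₁ → s ⊆ b₂ → b₁ = b₂ := by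
    intro s hs b₁ hb₁ b₂ hb₂ h₁ h₂
    obtain ⟨c, hc⟩ := Finset.card_eq_one.mp (hdesign s hs)
    have m₁ : b₁ ∈ 𝓑.filter (fun b => s ⊆ b) := Finset.mem_filter.mpr ⟨hb₁, h₁⟩
    have m₂ : b₂ ∈ 𝓑.filter (fun b => s ⊆ b) := Finset.mem_filter.mpr ⟨hb₂, h₂⟩
    rw [hc, Finset.mem_singleton] at m₁ m₂
    rw [m₁, m₂]
  have hexist : ∀ α : P, ∃ b ∈ 𝓑, ({α, g • α, g • g • α} : Finset P) ⊆ b := by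
    intro α
    obtain ⟨c, hc⟩ := Finset.card_eq_one.mp (hdesign _ (hs3 α))
    have hc' : c ∈ 𝓑.filter (fun b => ({α, g • α, g • g • α} : Finset P) ⊆ b) := by
      rw [hc]; exact Finset.mem_singleton_self c
    exact ⟨c, (Finset.mem_filter.mp hc').1, (Finset.mem_filter.mp hc').2⟩
  have hfixed : ∀ α : P, ∀ b ∈ 𝓑, ({α, g • α, g • g • α} : Finset P) ⊆ b →
      b.image (fun x => g • x) = b := by
    intro α b hb hsub
    have hb' := hpres g b hb
    apply huniq _ (hs3 α) _ hb' _ hb _ hsub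
    have m1 : α ∈ b.image (fun x => g • x) :=
      Finset.mem_image.mpr ⟨g • g • α, hsub (by simp), hg3 α⟩
    have m2 : g • α ∈ b.image (fun x => g • x) :=
      Finset.mem_image.mpr ⟨α, hsub (by simp), rfl⟩
    have m3 : g • g • α ∈ b.image (fun x => g • x) :=
      Finset.mem_image.mpr ⟨g • α, hsub (by simp), rfl⟩
    intro x hx
    simp only [Finset.mem_insert, Finset.mem_singleton] at hx
    rcases hx with h | h | h <;> rw [h] <;> assumption
  set F := 𝓑.filter (fun b => b.image (fun x => g • x) = b) with hF
  have hcover : ∀ α : P, ∃ b ∈ F, α ∈ b := by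
    intro α
    obtain ⟨b, hb, hsub⟩ := hexist α
    exact ⟨b, Finset.mem_filter.mpr ⟨hb, hfixed α b hb hsub⟩, hsub (by simp)⟩
  have hclosed : ∀ b ∈ F, ∀ α ∈ b, ({α, g • α, g • g • α} : Finset P) ⊆ b := by
    intro b hb α hα
    rw [Finset.mem_filter] at hb
    have hmem : ∀ x ∈ b, g • x ∈ b := by
      intro x hx
      have := Finset.mem_image_of_mem (fun x => g • x) hx
      rwa [hb.2] at this
    intro x hx
    simp only [Finset.mem_insert, Finset.mem_singleton] at hx
    rcases hx with h | h | h
    · subst h; exact hα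
    · subst h; exact hmem _ hα
    · subst h; exact hmem _ (hmem _ hα)
  have hdisj : ∀ b₁ ∈ F, ∀ b₂ ∈ F, b₁ ≠ b₂ → Disjoint (id b₁) (id b₂) := by
    intro b₁ hb₁ b₂ hb₂ hne
    simp only [id]
    rw [Finset.disjoint_left]
    intro α h₁ h₂
    exact hne (huniq _ (hs3 α) b₁ (Finset.mem_filter.mp hb₁).1 b₂
      (Finset.mem_filter.mp hb₂).1 (hclosed b₁ hb₁ α h₁) (hclosed b₂ hb₂ α h₂))
  have hunion : F.biUnion id = Finset.univ := by
    apply Finset.eq_univ_of_forall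
    intro α
    obtain ⟨b, hb, hα⟩ := hcover α
    exact Finset.mem_biUnion.mpr ⟨b, hb, hα⟩
  have hveq : v = F.card * k := by
    rw [← hv, ← Finset.card_univ, ← hunion, Finset.card_biUnion hdisj]
    have : ∑ u ∈ F, (id u).card = ∑ _u ∈ F, k :=
      Finset.sum_congr rfl (fun b hb => hblocks b (Finset.mem_filter.mp hb).1)
    rw [this, Finset.sum_const, smul_eq_mul]
  exact ⟨F.card, by rw [hveq, mul_comm]⟩
end

section
/- Let D = (P, B) be a 3-(v,k,1) design admitting a block-transitive group G of automorphisms. Then for every point α ∈ P, the product (v-1)(v-2) divides k(k-1)(k-2)·|G_α|, where G_α is the stabilizer of α in G. -/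
set_option maxHeartbeats 1000000


/-- For a `G`-block-transitive `3`-`(v,k,1)` design, `(v-1)(v-2)` divides
`k(k-1)(k-2)·|G_α|` for every point `α`. -/
theorem block_transitive_stabilizer_divisibility
    (P : Type*) [Fintype P] [DecidableEq P]
    (𝓑 : Finset (Finset P)) (v k : ℕ)
    (hv : Fintype.card P = v)
    (hk3 : 3 ≤ k) (hkv : k ≤ v)
    (hblocks : ∀ b ∈ 𝓑, b.card = k)
    (hdesign : ∀ s : Finset P, s.card = 3 →
      (𝓑.filter (fun b => s ⊆ b)).card = 1)
    (G : Type*) [Group G] [Finite G] [MulAction G P] [FaithfulSMul G P]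
    (hpres : ∀ (g : G), ∀ b ∈ 𝓑, b.image (fun x => g • x) ∈ 𝓑)
    (htrans : ∀ b₁ ∈ 𝓑, ∀ b₂ ∈ 𝓑, ∃ g : G, b₁.image (fun x => g • x) = b₂)
    (α : P) :
    (v - 1) * (v - 2) ∣ k * (k - 1) * (k - 2) * Nat.card (MulAction.stabilizer G α) := by
  classical
  have hv3 : 3 ≤ v := hk3.trans hkv
  -- the number of blocks through a point
  set r : P → ℕ := fun x => (𝓑.filter (fun b => x ∈ b)).card with hrdef
  -- the number of blocks through a pair
  set l : P → P → ℕ := fun x y => (𝓑.filter (fun b => x ∈ b ∧ y ∈ b)).card with hldef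
  -- a generic double count
  have pairsum : ∀ (x : P) (T : Finset P),
      ∑ y ∈ T, l x y = ∑ B ∈ 𝓑, if x ∈ B then (T ∩ B).card else 0 := by
    intro x T
    have : ∀ y ∈ T, l x y = ∑ B ∈ 𝓑, if x ∈ B ∧ y ∈ B then 1 else 0 := by
      intro y _
      exact Finset.card_filter _ _
    rw [Finset.sum_congr rfl this, Finset.sum_comm]
    refine Finset.sum_congr rfl fun B _ => ?_
    by_cases hx : x ∈ B
    · simp only [hx, true_and, if_true]
      rw [Finset.sum_boole, Nat.cast_id, Finset.filter_mem_eq_inter]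
    · simp [hx]
  -- λ₂ equations : each pair lies in (v-2)/(k-2) blocks
  have hlam : ∀ x y : P, x ≠ y → l x y * (k - 2) = v - 2 := by
    intro x y hxy
    set T : Finset P := (Finset.univ.erase x).erase y with hT
    have hyx : y ∈ Finset.univ.erase x := by simp [Finset.mem_erase, hxy.symm]
    have hTcard : T.card = v - 2 := by
      rw [hT, Finset.card_erase_of_mem hyx, Finset.card_erase_of_mem (Finset.mem_univ x)]
      rw [Finset.card_univ, hv]; omega
    have h1 : ∀ γ ∈ T, (𝓑.filter (fun b => x ∈ b ∧ y ∈ b ∧ γ ∈ b)).card = 1 := by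
      intro γ hγ
      have hγy : γ ≠ y := by simp [hT, Finset.mem_erase] at hγ; exact hγ.1
      have hγx : γ ≠ x := by simp [hT, Finset.mem_erase] at hγ; exact hγ.2
      have hs : ({x, y, γ} : Finset P).card = 3 := by
        rw [Finset.card_insert_of_notMem (by simp [hxy, hγx.symm]),
          Finset.card_insert_of_notMem (by simp [hγy.symm]), Finset.card_singleton]
      have := hdesign {x, y, γ} hs
      rw [← this]
      congr 1
      apply Finset.filter_congr
      intro b _
      simp [Finset.insert_subset_iff]
    -- double count the set {(B, γ) : x,y,γ ∈ B, γ ∉ {x,y}}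
    have key : ∑ γ ∈ T, (𝓑.filter (fun b => x ∈ b ∧ y ∈ b ∧ γ ∈ b)).card
        = ∑ B ∈ 𝓑, if x ∈ B ∧ y ∈ B then (T ∩ B).card else 0 := by
      have : ∀ γ ∈ T, (𝓑.filter (fun b => x ∈ b ∧ y ∈ b ∧ γ ∈ b)).card
          = ∑ B ∈ 𝓑, if x ∈ B ∧ y ∈ B ∧ γ ∈ B then 1 else 0 := by
        intro γ _; exact Finset.card_filter _ _
      rw [Finset.sum_congr rfl this, Finset.sum_comm]
      refine Finset.sum_congr rfl fun B _ => ?_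
      by_cases hx : x ∈ B ∧ y ∈ B
      · simp only [hx.1, hx.2, true_and, if_true]
        rw [Finset.sum_boole, Nat.cast_id, Finset.filter_mem_eq_inter]
      · rw [if_neg hx]
        rw [Finset.sum_eq_zero]
        intro γ _
        rw [if_neg (by tauto)]
    have hinter : ∀ B ∈ 𝓑, x ∈ B → y ∈ B → (T ∩ B).card = k - 2 := by
      intro B hB hxB hyB
      have : T ∩ B = (B.erase x).erase y := by
        ext z
        simp only [hT, Finset.mem_inter, Finset.mem_erase, Finset.mem_univ, and_true,
          true_and]
        tauto
      rw [this, Finset.card_erase_of_mem (by simp [Finset.mem_erase, hxy.symm, hyB]),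
        Finset.card_erase_of_mem hxB, hblocks B hB]
      omega
    have lhs1 : ∑ γ ∈ T, (𝓑.filter (fun b => x ∈ b ∧ y ∈ b ∧ γ ∈ b)).card = v - 2 := by
      rw [Finset.sum_congr rfl h1, Finset.sum_const, smul_eq_mul, mul_one]
      exact hTcard
    have rhs1 : ∑ B ∈ 𝓑, (if x ∈ B ∧ y ∈ B then (T ∩ B).card else 0)
        = l x y * (k - 2) := by
      have : ∀ B ∈ 𝓑, (if x ∈ B ∧ y ∈ B then (T ∩ B).card else 0)
          = (if x ∈ B ∧ y ∈ B then (k - 2) else 0) := by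
        intro B hB
        by_cases hx : x ∈ B ∧ y ∈ B
        · rw [if_pos hx, if_pos hx, hinter B hB hx.1 hx.2]
        · rw [if_neg hx, if_neg hx]
      rw [Finset.sum_congr rfl this, ← Finset.sum_filter, Finset.sum_const, smul_eq_mul]
    rw [← rhs1, ← key, lhs1]
  -- r equations
  have hr : ∀ x : P, r x * ((k - 1) * (k - 2)) = (v - 1) * (v - 2) := by
    intro x
    have key := pairsum x (Finset.univ.erase x)
    have hinner : ∀ B ∈ 𝓑, (if x ∈ B then ((Finset.univ.erase x) ∩ B).card else 0)
        = if x ∈ B then k - 1 else 0 := by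
      intro B hB
      by_cases hx : x ∈ B
      · rw [if_pos hx, if_pos hx]
        have : (Finset.univ.erase x) ∩ B = B.erase x := by
          ext z
          simp only [Finset.mem_inter, Finset.mem_erase, Finset.mem_univ, and_true, true_and]
          try tauto
        rw [this, Finset.card_erase_of_mem hx, hblocks B hB]
      · rw [if_neg hx, if_neg hx]
    rw [Finset.sum_congr rfl hinner, ← Finset.sum_filter, Finset.sum_const, smul_eq_mul] at key
    have hlhs : (∑ y ∈ Finset.univ.erase x, l x y) * (k - 2) = (v - 1) * (v - 2) := by
      rw [Finset.sum_mul]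
      have : ∀ y ∈ Finset.univ.erase x, l x y * (k - 2) = v - 2 := by
        intro y hy
        have : y ≠ x := by simp [Finset.mem_erase] at hy; exact hy
        exact hlam x y (fun h => this h.symm)
      rw [Finset.sum_congr rfl this, Finset.sum_const, smul_eq_mul,
        Finset.card_erase_of_mem (Finset.mem_univ x), Finset.card_univ, hv]
    rw [key] at hlhs
    rw [← hlhs, mul_assoc]
  -- positivity facts
  have hk2 : 0 < (k - 1) * (k - 2) := by
    have : 1 ≤ k - 1 := by omega
    have : 1 ≤ k - 2 := by omega
    positivity
  have hvv : 0 < (v - 1) * (v - 2) := by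
    have : 1 ≤ v - 1 := by omega
    have : 1 ≤ v - 2 := by omega
    positivity
  have hrpos : ∀ x, 0 < r x := by
    intro x
    rcases Nat.eq_zero_or_pos (r x) with h | h
    · exfalso; have := hr x; rw [h, zero_mul] at this; omega
    · exact h
  -- r is constant
  have hrconst : ∀ x : P, r x = r α := by
    intro x
    have h1 := hr x
    have h2 := hr α
    exact Nat.eq_of_mul_eq_mul_right hk2 (h1.trans h2.symm)
  -- there exists a block
  have hBex : ∃ B, B ∈ 𝓑 := by
    have := hrpos α
    rw [hrdef] at this
    simp only [Finset.card_pos, Finset.filter_nonempty_iff] at this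
    obtain ⟨B, hB, -⟩ := this
    exact ⟨B, hB⟩
  obtain ⟨B₀, hB₀⟩ := hBex
  -- the orbit of α as a finset
  set O : Finset P := Finset.univ.filter (fun x => ∃ g : G, g • α = x) with hOdef
  have hαO : α ∈ O := by
    rw [hOdef]; simp only [Finset.mem_filter, Finset.mem_univ, true_and]
    exact ⟨1, one_smul G α⟩
  have hOinv : ∀ (g : G) (z : P), z ∈ O → g • z ∈ O := by
    intro g z hz
    rw [hOdef] at hz ⊢
    simp only [Finset.mem_filter, Finset.mem_univ, true_and] at hz ⊢
    obtain ⟨h, rfl⟩ := hz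
    exact ⟨g * h, mul_smul g h α⟩
  set n : ℕ := O.card with hndef
  have hn1 : 1 ≤ n := Finset.card_pos.mpr ⟨α, hαO⟩
  -- each block meets O in the same number of points
  set c : ℕ := (O ∩ B₀).card with hcdef
  have hOB : ∀ B ∈ 𝓑, (O ∩ B).card = c := by
    intro B hB
    obtain ⟨g, hg⟩ := htrans B₀ hB₀ B hB
    have him : O ∩ B = (O ∩ B₀).image (fun x => g • x) := by
      ext z
      simp only [Finset.mem_inter, Finset.mem_image, ← hg]
      constructor
      · rintro ⟨hzO, w, hwB, rfl⟩
        refine ⟨w, ⟨?_, hwB⟩, rfl⟩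
        have := hOinv g⁻¹ _ hzO
        rwa [inv_smul_smul] at this
      · rintro ⟨w, ⟨hwO, hwB⟩, rfl⟩
        exact ⟨hOinv g w hwO, w, hwB, rfl⟩
    rw [him, Finset.card_image_of_injective _ (MulAction.injective g)]
  -- another generic double count
  have pointsum : ∀ T : Finset P, ∑ x ∈ T, r x = ∑ B ∈ 𝓑, (T ∩ B).card := by
    intro T
    have : ∀ x ∈ T, r x = ∑ B ∈ 𝓑, if x ∈ B then 1 else 0 := by
      intro x _
      exact Finset.card_filter _ _
    rw [Finset.sum_congr rfl this, Finset.sum_comm]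
    refine Finset.sum_congr rfl fun B _ => ?_
    rw [Finset.sum_boole, Nat.cast_id, Finset.filter_mem_eq_inter]
  have hbpos : 0 < 𝓑.card := Finset.card_pos.mpr ⟨B₀, hB₀⟩
  -- flag count : b * k = v * r
  have E2 : v * r α = 𝓑.card * k := by
    have key := pointsum Finset.univ
    have h1 : ∑ x ∈ Finset.univ, r x = v * r α := by
      rw [Finset.sum_congr rfl (fun x _ => hrconst x), Finset.sum_const, smul_eq_mul,
        Finset.card_univ, hv]
    have h2 : ∑ B ∈ 𝓑, (Finset.univ ∩ B).card = 𝓑.card * k := by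
      have : ∀ B ∈ 𝓑, (Finset.univ ∩ B).card = k := by
        intro B hB
        rw [Finset.univ_inter, hblocks B hB]
      rw [Finset.sum_congr rfl this, Finset.sum_const, smul_eq_mul]
    rw [← h1, key, h2]
  -- double count flags in the orbit : n * r = b * c
  have E3 : n * r α = 𝓑.card * c := by
    have key := pointsum O
    have h1 : ∑ x ∈ O, r x = n * r α := by
      rw [Finset.sum_congr rfl (fun x _ => hrconst x), Finset.sum_const, smul_eq_mul]
    have h2 : ∑ B ∈ 𝓑, (O ∩ B).card = 𝓑.card * c := by
      rw [Finset.sum_congr rfl hOB, Finset.sum_const, smul_eq_mul]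
    rw [← h1, key, h2]
  have hc1 : 1 ≤ c := by
    rcases Nat.eq_zero_or_pos c with h | h
    · exfalso
      rw [h, mul_zero] at E3
      have := Nat.mul_pos hn1 (hrpos α)
      omega
    · exact h
  -- double count pairs in the orbit
  have E4 : (n - 1) * (v - 2) = r α * ((c - 1) * (k - 2)) := by
    have step2 : ∑ x ∈ O, ∑ y ∈ O.erase x, l x y = 𝓑.card * (c * (c - 1)) := by
      have h1 : ∀ x ∈ O, ∑ y ∈ O.erase x, l x y
          = ∑ B ∈ 𝓑, if x ∈ B then ((O.erase x) ∩ B).card else 0 :=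
        fun x _ => pairsum x (O.erase x)
      rw [Finset.sum_congr rfl h1, Finset.sum_comm]
      have h2 : ∀ B ∈ 𝓑, (∑ x ∈ O, if x ∈ B then ((O.erase x) ∩ B).card else 0)
          = c * (c - 1) := by
        intro B hB
        have hsf : (∑ x ∈ O, if x ∈ B then ((O.erase x) ∩ B).card else 0)
            = ∑ x ∈ O.filter (· ∈ B), ((O.erase x) ∩ B).card :=
          (Finset.sum_filter _ _).symm
        rw [hsf]
        have h3 : ∀ x ∈ O.filter (· ∈ B), ((O.erase x) ∩ B).card = c - 1 := by
          intro x hx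
          rw [Finset.mem_filter] at hx
          have he : (O.erase x) ∩ B = (O ∩ B).erase x := by
            ext z
            simp only [Finset.mem_inter, Finset.mem_erase]
            tauto
          rw [he, Finset.card_erase_of_mem (Finset.mem_inter.mpr ⟨hx.1, hx.2⟩), hOB B hB]
        rw [Finset.sum_congr rfl h3, Finset.sum_const, smul_eq_mul]
        have : (O.filter (· ∈ B)).card = c := by
          rw [Finset.filter_mem_eq_inter, hOB B hB]
        rw [this]
      rw [Finset.sum_congr rfl h2, Finset.sum_const, smul_eq_mul]
    have step1 : (∑ x ∈ O, ∑ y ∈ O.erase x, l x y) * (k - 2) = n * ((n - 1) * (v - 2)) := by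
      rw [Finset.sum_mul]
      have h1 : ∀ x ∈ O, (∑ y ∈ O.erase x, l x y) * (k - 2) = (n - 1) * (v - 2) := by
        intro x hx
        rw [Finset.sum_mul]
        have h2 : ∀ y ∈ O.erase x, l x y * (k - 2) = v - 2 := by
          intro y hy
          have hyx : y ≠ x := (Finset.mem_erase.mp hy).1
          exact hlam x y (fun h => hyx h.symm)
        rw [Finset.sum_congr rfl h2, Finset.sum_const, smul_eq_mul,
          Finset.card_erase_of_mem hx]
      rw [Finset.sum_congr rfl h1, Finset.sum_const, smul_eq_mul]
    have main : n * ((n - 1) * (v - 2)) = n * (r α * ((c - 1) * (k - 2))) := by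
      rw [← step1, step2]
      have hb : 𝓑.card * (c * (c - 1)) * (k - 2) = (𝓑.card * c) * ((c - 1) * (k - 2)) := by
        ring
      rw [hb, ← E3, mul_assoc]
    exact Nat.eq_of_mul_eq_mul_left hn1 main
  -- conclude transitivity (case v > k) or handle v = k
  clear_value r l O n c
  by_cases hvk : v = k
  · -- degenerate case : single block
    refine ⟨k * Nat.card (MulAction.stabilizer G α), ?_⟩
    rw [hvk]
    ring
  · have hkv' : k < v := lt_of_le_of_ne hkv (fun h => hvk h.symm)
    have E1 := hr α
    have hnv : n = v := by
      have hk1 : 1 ≤ k := by omega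
      have hk2' : 2 ≤ k := by omega
      have hv1 : 1 ≤ v := by omega
      have hv2' : 2 ≤ v := by omega
      zify [hk1, hk2', hv1, hv2', hn1, hc1] at E1 E2 E3 E4
      have hRpos : 0 < ((r α : ℤ)) := by exact_mod_cast hrpos α
      have hbz : 0 < ((𝓑.card : ℤ)) := by exact_mod_cast hbpos
      have hkz : (k : ℤ) < v := by exact_mod_cast hkv'
      have hk3z : (3 : ℤ) ≤ k := by exact_mod_cast hk3
      have hnz : (0 : ℤ) < n := by exact_mod_cast hn1
      have h1 : (n : ℤ) * ((r α : ℤ) * (r α) * ((k:ℤ) - 2) - (𝓑.card : ℤ) * ((v:ℤ) - 2))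
          = (𝓑.card : ℤ) * ((r α : ℤ) * ((k:ℤ) - 2) - ((v:ℤ) - 2)) := by
        linear_combination ((r α : ℤ) * ((k:ℤ) - 2)) * E3 - (𝓑.card : ℤ) * E4
      have h2 : (v : ℤ) * ((r α : ℤ) * (r α) * ((k:ℤ) - 2) - (𝓑.card : ℤ) * ((v:ℤ) - 2))
          = (𝓑.card : ℤ) * ((r α : ℤ) * ((k:ℤ) - 2) - ((v:ℤ) - 2)) := by
        linear_combination (𝓑.card : ℤ) * E1 + ((r α : ℤ) * ((k:ℤ) - 2)) * E2
      have hv2z : (0:ℤ) < (v:ℤ) - 2 := by linarith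
      have hk1z : (0:ℤ) < (k:ℤ) - 1 := by linarith
      have hgt : ((v:ℤ) - 2) < (r α : ℤ) * ((k:ℤ) - 2) := by
        have hid : ((k:ℤ)-1) * ((r α:ℤ) * ((k:ℤ)-2)) = ((v:ℤ)-1)*((v:ℤ)-2) := by
          linear_combination E1
        have step : ((k:ℤ)-1) * ((v:ℤ)-2) < ((k:ℤ)-1) * ((r α:ℤ) * ((k:ℤ)-2)) := by
          rw [hid]
          exact mul_lt_mul_of_pos_right (by linarith) hv2z
        exact lt_of_mul_lt_mul_left step hk1z.le
      have hEpos : 0 < (𝓑.card : ℤ) * ((r α : ℤ) * ((k:ℤ) - 2) - ((v:ℤ) - 2)) :=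
        mul_pos hbz (by linarith)
      have hDpos : 0 < (r α : ℤ) * (r α) * ((k:ℤ) - 2) - (𝓑.card : ℤ) * ((v:ℤ) - 2) := by
        rcases lt_or_ge 0 ((r α : ℤ) * (r α) * ((k:ℤ) - 2) - (𝓑.card : ℤ) * ((v:ℤ) - 2))
          with h | h
        · exact h
        · exfalso
          have hnp := mul_nonpos_of_nonneg_of_nonpos hnz.le h
          linarith [h1, hEpos]
      have h12 := h1.trans h2.symm
      have := mul_right_cancel₀ (ne_of_gt hDpos) h12
      exact_mod_cast this
    -- group counting
    letI : Fintype G := Fintype.ofFinite G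
    set tα : ℕ := (Finset.univ.filter (fun g : G => g • α = α)).card with htαdef
    set tB : ℕ := (Finset.univ.filter
      (fun g : G => B₀.image (fun x => g • x) = B₀)).card with htBdef
    -- the stabilizer has cardinality tα
    have htα : Nat.card (MulAction.stabilizer G α) = tα := by
      rw [Nat.card_eq_fintype_card, htαdef, ← Fintype.card_subtype]
      apply Fintype.card_congr
      exact Equiv.subtypeEquivRight (fun g => by
        simp [MulAction.mem_stabilizer_iff])
    -- fibers of g ↦ g • α all have cardinality tα
    have fib1 : ∀ g₁ : G, (Finset.univ.filter (fun g : G => g • α = g₁ • α)).card = tα := by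
      intro g₁
      rw [htαdef]
      refine (Finset.card_bij (fun (h : G) _ => g₁ * h) ?_ ?_ ?_).symm
      · intro h hh
        simp only [Finset.mem_filter, Finset.mem_univ, true_and] at hh ⊢
        rw [mul_smul, hh]
      · intro h₁ _ h₂ _ he
        exact mul_left_cancel he
      · intro g hg
        simp only [Finset.mem_filter, Finset.mem_univ, true_and] at hg
        refine ⟨g₁⁻¹ * g, ?_, by group⟩
        simp only [Finset.mem_filter, Finset.mem_univ, true_and, mul_smul, hg,
          inv_smul_smul]
    -- orbit-stabilizer : |G| = n * tα
    have horb : Fintype.card G = n * tα := by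
      have hmaps : ∀ g : G, (fun g : G => g • α) g ∈ O := by
        intro g
        rw [hOdef]
        simp only [Finset.mem_filter, Finset.mem_univ, true_and]
        exact ⟨g, rfl⟩
      have hfib := Finset.card_eq_sum_card_fiberwise
        (f := fun g : G => g • α) (s := Finset.univ) (t := O) (fun g _ => hmaps g)
      rw [← Finset.card_univ, hfib]
      have : ∀ x ∈ O, (Finset.univ.filter (fun g : G => g • α = x)).card = tα := by
        intro x hx
        rw [hOdef] at hx
        simp only [Finset.mem_filter, Finset.mem_univ, true_and] at hx
        obtain ⟨g₁, rfl⟩ := hx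
        exact fib1 g₁
      rw [Finset.sum_congr rfl this, Finset.sum_const, smul_eq_mul, ← hndef]
    -- block transitivity : |G| = b * tB
    have hGb : Fintype.card G = 𝓑.card * tB := by
      have hmaps : ∀ g : G, B₀.image (fun x => g • x) ∈ 𝓑 := fun g => hpres g B₀ hB₀
      have hfib := Finset.card_eq_sum_card_fiberwise
        (f := fun g : G => B₀.image (fun x => g • x)) (s := Finset.univ) (t := 𝓑)
        (fun g _ => hmaps g)
      rw [← Finset.card_univ, hfib]
      have : ∀ B ∈ 𝓑,
          (Finset.univ.filter (fun g : G => B₀.image (fun x => g • x) = B)).card = tB := by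
        intro B hB
        obtain ⟨g₁, hg₁⟩ := htrans B₀ hB₀ B hB
        rw [htBdef]
        refine (Finset.card_bij (fun (h : G) _ => g₁ * h) ?_ ?_ ?_).symm
        · intro h hh
          simp only [Finset.mem_filter, Finset.mem_univ, true_and] at hh ⊢
          have : B₀.image (fun x => (g₁ * h) • x)
              = (B₀.image (fun x => h • x)).image (fun x => g₁ • x) := by
            rw [Finset.image_image]
            apply Finset.image_congr
            intro x _
            simp [mul_smul]
          rw [this, hh, hg₁]
        · intro h₁ _ h₂ _ he
          exact mul_left_cancel he
        · intro g hg
          simp only [Finset.mem_filter, Finset.mem_univ, true_and] at hg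
          refine ⟨g₁⁻¹ * g, ?_, by group⟩
          simp only [Finset.mem_filter, Finset.mem_univ, true_and]
          have : B₀.image (fun x => (g₁⁻¹ * g) • x)
              = (B₀.image (fun x => g • x)).image (fun x => g₁⁻¹ • x) := by
            rw [Finset.image_image]
            apply Finset.image_congr
            intro x _
            simp [mul_smul]
          rw [this, hg, ← hg₁, Finset.image_image]
          have : ((fun x : P => g₁⁻¹ • x) ∘ (fun x : P => g₁ • x)) = id := by
            funext x
            simp
          rw [this, Finset.image_id]
      rw [Finset.sum_congr rfl this, Finset.sum_const, smul_eq_mul]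
    -- assemble everything
    have hcardG : v * tα = 𝓑.card * tB := by
      rw [← hnv, ← horb, hGb]
    refine ⟨tB, ?_⟩
    rw [htα]
    have hstep : v * (k * (k - 1) * (k - 2) * tα) = v * ((v - 1) * (v - 2) * tB) := by
      have h1 : v * (k * (k - 1) * (k - 2) * tα) = (k * (k - 1) * (k - 2)) * (v * tα) := by
        ring
      rw [h1, hcardG]
      have h2 : k * (k - 1) * (k - 2) * (𝓑.card * tB)
          = ((𝓑.card * k) * ((k - 1) * (k - 2))) * tB := by
        ring
      rw [h2, ← E2]
      have h3 : v * r α * ((k - 1) * (k - 2)) * tB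
          = v * ((r α * ((k - 1) * (k - 2))) * tB) := by
        ring
      rw [h3, hr α]
    exact Nat.eq_of_mul_eq_mul_left (by omega) hstep
end

section
/- Let D = (P, B) be a 3-(v,k,1) design admitting a block-transitive group G of automorphisms. Then for every nontrivial subdegree d of G on P (i.e. the length d of an orbit of G_α on P other than {α}), the product (v-1)(v-2) divides k(k-1)(k-2)·d·(d-1). -/
/-!
Counting the ordered triples `(x, y, z)` with `y ≠ z` and `(x, y)`, `(x, z)` in the orbital of
`(α, β)` in two ways gives the result. Each such triple lies in a unique block, and since `G` is
block-transitive every block contains the same number `n` of them, so there are `n · b` of them,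
where `b = v(v-1)(v-2) / k(k-1)(k-2)` is the number of blocks. On the other hand a
block-transitive group of a nontrivial `2`-design is point-transitive, so every point has `d`
neighbours in the orbital and there are `v · d(d-1)` triples. Point-transitivity comes from
counting, for an orbit `O` of size `m` meeting every block in `c` points, the flags and the
pairs of `O` inside blocks: this forces `(v - m)(v - k) = 0`.
-/

open Finset MulAction
open scoped Pointwise

theorem eq_zero_or_eq_of_design_counts {v k B m c : ℕ} (hk : 3 ≤ k) (hkv : k < v)
    (hB : B * (k * (k - 1) * (k - 2)) = v * (v - 1) * (v - 2))
    (h₁ : B * c * ((k - 1) * (k - 2)) = m * ((v - 1) * (v - 2)))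
    (h₂ : B * (c * c - c) * (k - 2) = (m * m - m) * (v - 2)) :
    m = 0 ∨ m = v := by
  zify [Nat.le_mul_self c, Nat.le_mul_self m, show 2 ≤ k by omega, show 2 ≤ v by omega,
    show 1 ≤ k by omega, show 1 ≤ v by omega] at hB h₁ h₂
  have hk' : (3 : ℤ) ≤ k := by exact_mod_cast hk
  have hkv' : (k : ℤ) < v := by exact_mod_cast hkv
  have hcv : (c : ℤ) * v = m * k := by
    have h : ((c : ℤ) * v - m * k) * ((v - 1) * (v - 2)) = 0 := by
      linear_combination k * h₁ - c * hB
    rcases mul_eq_zero.1 h with h | h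
    · linarith
    · rcases mul_eq_zero.1 h with h | h <;> linarith
  have h : (m : ℤ) * (v - m) * ((v - k) * (v - 2)) = 0 := by
    linear_combination (-v) * ((k - 1) * h₂ - (c - 1) * h₁) + m * (v - 2) * (v - 1) * hcv
  rcases mul_eq_zero.1 h with h | h
  · rcases mul_eq_zero.1 h with h | h
    · exact Or.inl (by exact_mod_cast h)
    · exact Or.inr (by linarith)
  · rcases mul_eq_zero.1 h with h | h <;> linarith

section

variable {P : Type*}

section Design

variable [DecidableEq P]

/-- A Steiner system `S(t, k, v)`, i.e. a `t`-`(v, k, 1)` design, on the points of `P`. -/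
structure IsSteinerSystem (t k : ℕ) (𝓑 : Finset (Finset P)) : Prop where
  card_eq : ∀ b ∈ 𝓑, #b = k
  card_filter_superset : ∀ s : Finset P, #s = t → #(𝓑.filter (s ⊆ ·)) = 1

namespace IsSteinerSystem

variable {t k : ℕ} {𝓑 : Finset (Finset P)}

theorem card_filter_product_mem (hD : IsSteinerSystem 3 k 𝓑) {x y z : P} (hxy : x ≠ y)
    (hxz : x ≠ z) (hyz : y ≠ z) : #(𝓑.filter fun b => (x, y, z) ∈ b ×ˢ b ×ˢ b) = 1 := by
  have := hD.card_filter_superset {x, y, z} (card_eq_three.2 ⟨x, y, z, hxy, hxz, hyz, rfl⟩)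
  simpa only [mem_product, insert_subset_iff, singleton_subset_iff] using this

variable [Fintype P]

theorem nonempty (hD : IsSteinerSystem t k 𝓑) (ht : t ≤ Fintype.card P) : 𝓑.Nonempty := by
  obtain ⟨s, -, hs⟩ := exists_subset_card_eq (s := (univ : Finset P)) (by simpa using ht)
  exact (card_pos.1 (by rw [hD.card_filter_superset s hs]; exact one_pos)).mono
    (filter_subset _ _)

theorem card_filter_superset_mul_choose (hD : IsSteinerSystem t k 𝓑) {s : Finset P}
    (hs : #s ≤ t) :
    #(𝓑.filter (s ⊆ ·)) * (k - #s).choose (t - #s)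
      = (Fintype.card P - #s).choose (t - #s) := by
  have := card_mul_eq_card_mul (s := 𝓑.filter (s ⊆ ·)) (t := powersetCard (t - #s) sᶜ)
    (r := fun b u => u ⊆ b) (m := (k - #s).choose (t - #s)) (n := 1) ?_ ?_
  · rwa [card_powersetCard, card_compl, mul_one] at this
  · intro b hb
    rw [mem_filter] at hb
    have habove : (powersetCard (t - #s) sᶜ).bipartiteAbove (fun b u => u ⊆ b) b
        = powersetCard (t - #s) (b \ s) := by
      ext u
      simp only [mem_bipartiteAbove, mem_powersetCard, subset_sdiff,
        subset_compl_iff_disjoint_right]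
      tauto
    rw [habove, card_powersetCard, card_sdiff_of_subset hb.2, hD.card_eq b hb.1]
  · intro u hu
    rw [mem_powersetCard, subset_compl_iff_disjoint_right] at hu
    have hbelow : (𝓑.filter (s ⊆ ·)).bipartiteBelow (fun b u => u ⊆ b) u
        = 𝓑.filter (s ∪ u ⊆ ·) := by
      ext b
      simp only [mem_bipartiteBelow, mem_filter, union_subset_iff, and_assoc]
    rw [hbelow, hD.card_filter_superset _ (by rw [card_union_of_disjoint hu.1.symm]; omega)]

theorem card_filter_superset_mul_descFactorial (hD : IsSteinerSystem t k 𝓑) {s : Finset P}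
    (hs : #s ≤ t) :
    #(𝓑.filter (s ⊆ ·)) * (k - #s).descFactorial (t - #s)
      = (Fintype.card P - #s).descFactorial (t - #s) := by
  simp only [Nat.descFactorial_eq_factorial_mul_choose,
    ← hD.card_filter_superset_mul_choose hs]
  ring

theorem card_filter_mem_mem_mul (hD : IsSteinerSystem 3 k 𝓑) {x y : P} (hxy : x ≠ y) :
    #(𝓑.filter fun b => x ∈ b ∧ y ∈ b) * (k - 2) = Fintype.card P - 2 := by
  have := hD.card_filter_superset_mul_descFactorial (s := {x, y}) (by simp [card_pair hxy])
  simpa [card_pair hxy, insert_subset_iff, Nat.descFactorial] using this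

theorem card_filter_mem_mul (hD : IsSteinerSystem 3 k 𝓑) (x : P) :
    #(𝓑.filter (x ∈ ·)) * ((k - 1) * (k - 2))
      = (Fintype.card P - 1) * (Fintype.card P - 2) := by
  have := hD.card_filter_superset_mul_descFactorial (s := {x}) (by simp)
  simp only [card_singleton, singleton_subset_iff, Nat.reduceSub, Nat.descFactorial,
    Nat.sub_sub] at this
  linarith

theorem card_mul (hD : IsSteinerSystem 3 k 𝓑) :
    #𝓑 * (k * (k - 1) * (k - 2))
      = Fintype.card P * (Fintype.card P - 1) * (Fintype.card P - 2) := by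
  have := hD.card_filter_superset_mul_descFactorial (s := ∅) (by simp)
  simp only [card_empty, empty_subset, filter_true, Nat.sub_zero, Nat.descFactorial] at this
  linarith

theorem sum_card_inter_mul (hD : IsSteinerSystem 3 k 𝓑) (O : Finset P) :
    (∑ b ∈ 𝓑, #(b ∩ O)) * ((k - 1) * (k - 2))
      = #O * ((Fintype.card P - 1) * (Fintype.card P - 2)) := by
  have := sum_card_bipartiteAbove_eq_sum_card_bipartiteBelow (s := 𝓑) (t := O)
    (r := fun b x => x ∈ b)
  simp only [bipartiteAbove, bipartiteBelow, filter_mem_eq_inter, inter_comm O] at this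
  rw [this, sum_mul, sum_congr rfl fun x _ => hD.card_filter_mem_mul x, sum_const, smul_eq_mul]

theorem sum_card_offDiag_inter_mul (hD : IsSteinerSystem 3 k 𝓑) (O : Finset P) :
    (∑ b ∈ 𝓑, #(b ∩ O).offDiag) * (k - 2) = #O.offDiag * (Fintype.card P - 2) := by
  have := sum_card_bipartiteAbove_eq_sum_card_bipartiteBelow (s := 𝓑) (t := O.offDiag)
    (r := fun b p => p.1 ∈ b ∧ p.2 ∈ b)
  have hoff (b : Finset P) :
      O.offDiag.bipartiteAbove (fun b p => p.1 ∈ b ∧ p.2 ∈ b) b = (b ∩ O).offDiag := by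
    ext p
    simp only [mem_bipartiteAbove, mem_offDiag, mem_inter]
    tauto
  simp only [hoff] at this
  rw [this, sum_mul]
  exact sum_const_nat fun p hp => hD.card_filter_mem_mem_mul (mem_offDiag.1 hp).2.2

theorem card_eq_zero_or_card_eq_of_card_inter_eq (hD : IsSteinerSystem 3 k 𝓑) (hk : 3 ≤ k)
    (hkv : k < Fintype.card P) {O : Finset P} {c : ℕ} (hc : ∀ b ∈ 𝓑, #(b ∩ O) = c) :
    #O = 0 ∨ #O = Fintype.card P := by
  refine eq_zero_or_eq_of_design_counts hk hkv hD.card_mul (c := c) ?_ ?_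
  · rw [← hD.sum_card_inter_mul, sum_const_nat hc]
  · rw [← offDiag_card, ← hD.sum_card_offDiag_inter_mul,
      sum_const_nat fun b hb => by rw [offDiag_card, hc b hb]]

end IsSteinerSystem

end Design

section Action

variable {G : Type*} [Group G]

theorem Finset.card_smul_finset_inter_of_smul_mem {α : Type*} [DecidableEq α] [MulAction G α]
    {S : Finset α} (hS : ∀ g : G, ∀ x ∈ S, g • x ∈ S) (g : G) (A : Finset α) :
    #(g • A ∩ S) = #(A ∩ S) := by
  have hgS : g • S = S := eq_of_subset_of_card_le
    (fun y hy => by obtain ⟨x, hx, rfl⟩ := mem_smul_finset.1 hy; exact hS g x hx)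
    (card_smul_finset g S).ge
  rw [← card_smul_finset g (A ∩ S), smul_finset_inter, hgS]

theorem Finset.smul_finset_product {α β : Type*} [DecidableEq α] [DecidableEq β]
    [MulAction G α] [MulAction G β] (g : G) (s : Finset α) (t : Finset β) :
    g • (s ×ˢ t) = (g • s) ×ˢ (g • t) :=
  coe_injective (by push_cast; exact Set.smul_set_prod g (s : Set α) (t : Set β))

variable [DecidableEq P] [MulAction G P] {k : ℕ} {𝓑 : Finset (Finset P)}

theorem IsSteinerSystem.card_eq_card_mul_card_inter (hD : IsSteinerSystem 3 k 𝓑)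
    (htrans : ∀ b₁ ∈ 𝓑, ∀ b₂ ∈ 𝓑, ∃ g : G, g • b₁ = b₂) {T : Finset (P × P × P)}
    (hT : ∀ g : G, ∀ t ∈ T, g • t ∈ T)
    (hdistinct : ∀ t ∈ T, t.1 ≠ t.2.1 ∧ t.1 ≠ t.2.2 ∧ t.2.1 ≠ t.2.2) {b : Finset P}
    (hb : b ∈ 𝓑) : #T = #𝓑 * #(T ∩ b ×ˢ b ×ˢ b) := by
  simpa using card_mul_eq_card_mul (s := T) (t := 𝓑) (r := fun t b => t ∈ b ×ˢ b ×ˢ b)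
    (m := 1) (n := #(T ∩ b ×ˢ b ×ˢ b))
    (fun ⟨x, y, z⟩ ht => hD.card_filter_product_mem (hdistinct _ ht).1 (hdistinct _ ht).2.1
      (hdistinct _ ht).2.2)
    (fun b' hb' => by
      obtain ⟨g, rfl⟩ := htrans b hb b' hb'
      rw [bipartiteBelow, filter_mem_eq_inter, ← smul_finset_product, ← smul_finset_product,
        inter_comm, card_smul_finset_inter_of_smul_mem hT, inter_comm])

variable [Fintype P]

theorem IsSteinerSystem.isPretransitive (hD : IsSteinerSystem 3 k 𝓑) (hk : 3 ≤ k)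
    (hkv : k < Fintype.card P) (htrans : ∀ b₁ ∈ 𝓑, ∀ b₂ ∈ 𝓑, ∃ g : G, g • b₁ = b₂) :
    IsPretransitive G P := by
  classical
  refine ⟨fun x y => ?_⟩
  set O := univ.filter (· ∈ orbit G x)
  have hO : ∀ g : G, ∀ z ∈ O, g • z ∈ O := fun g z hz => by
    simpa [O] using mem_orbit_of_mem_orbit g (mem_filter.1 hz).2
  obtain ⟨b₀, hb₀⟩ := hD.nonempty (by omega)
  have hc : ∀ b ∈ 𝓑, #(b ∩ O) = #(b₀ ∩ O) := fun b hb => by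
    obtain ⟨g, rfl⟩ := htrans b₀ hb₀ b hb
    exact card_smul_finset_inter_of_smul_mem hO g b₀
  have hxO : x ∈ O := by simp [O]
  rcases hD.card_eq_zero_or_card_eq_of_card_inter_eq hk hkv hc with h | h
  · exact absurd (card_eq_zero.1 h ▸ hxO) (notMem_empty x)
  · have hy : y ∈ O := (eq_univ_of_card O h).symm ▸ mem_univ y
    exact (mem_filter.1 hy).2

end Action

section Orbital

variable {G : Type*} [Group G] [MulAction G P]

theorem MulAction.ncard_setOf_mem_orbit_prod [IsPretransitive G P] (α β x : P) :
    {y | (x, y) ∈ orbit G (α, β)}.ncard = (orbit (stabilizer G α) β).ncard := by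
  obtain ⟨g, rfl⟩ := exists_smul_eq G α x
  have : {y | (g • α, y) ∈ orbit G (α, β)} = (g • ·) '' orbit (stabilizer G α) β := by
    ext y
    constructor
    · rintro ⟨h, hh⟩
      obtain ⟨hα, rfl⟩ := Prod.ext_iff.1 hh
      refine ⟨(g⁻¹ * h) • β, ⟨⟨g⁻¹ * h, ?_⟩, rfl⟩, by simp [mul_smul]⟩
      simpa [mem_stabilizer_iff, mul_smul, inv_smul_eq_iff] using hα
    · rintro ⟨_, ⟨⟨s, hs⟩, rfl⟩, rfl⟩
      exact ⟨g * s, by simp [mul_smul, mem_stabilizer_iff.1 hs]⟩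
  rw [this, Set.ncard_image_of_injective _ (MulAction.injective g)]

variable [Fintype P]

variable (G) in
open Classical in
noncomputable def orbitalForks (α β : P) : Finset (P × P × P) :=
  univ.filter fun t =>
    (t.1, t.2.1) ∈ orbit G (α, β) ∧ (t.1, t.2.2) ∈ orbit G (α, β) ∧ t.2.1 ≠ t.2.2

theorem smul_mem_orbitalForks {α β : P} (g : G) {t : P × P × P}
    (ht : t ∈ orbitalForks G α β) : g • t ∈ orbitalForks G α β := by
  simp only [orbitalForks, mem_filter, mem_univ, true_and] at ht ⊢
  exact ⟨mem_orbit_of_mem_orbit g ht.1, mem_orbit_of_mem_orbit g ht.2.1,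
    (MulAction.injective g).ne ht.2.2⟩

theorem pairwise_ne_of_mem_orbitalForks {α β : P} (hαβ : α ≠ β) {t : P × P × P}
    (ht : t ∈ orbitalForks G α β) : t.1 ≠ t.2.1 ∧ t.1 ≠ t.2.2 ∧ t.2.1 ≠ t.2.2 := by
  have hne : ∀ x y : P, (x, y) ∈ orbit G (α, β) → x ≠ y := by
    rintro x y ⟨g, hg⟩ rfl
    exact hαβ (MulAction.injective g ((Prod.ext_iff.1 hg).1.trans (Prod.ext_iff.1 hg).2.symm))
  simp only [orbitalForks, mem_filter, mem_univ, true_and] at ht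
  exact ⟨hne _ _ ht.1, hne _ _ ht.2.1, ht.2.2⟩

theorem card_orbitalForks [IsPretransitive G P] (α β : P) :
    #(orbitalForks G α β) = Fintype.card P *
      ((orbit (stabilizer G α) β).ncard * ((orbit (stabilizer G α) β).ncard - 1)) := by
  classical
  rw [orbitalForks, card_filter, Fintype.sum_prod_type, ← smul_eq_mul, ← card_univ,
    ← sum_const]
  refine sum_congr rfl fun x _ => ?_
  rw [← card_filter, ← ncard_setOf_mem_orbit_prod (G := G) α β x, Set.ncard_eq_toFinset_card',
    Set.toFinset_ofPred, Nat.mul_sub_one, ← offDiag_card]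
  congr 1
  ext ⟨y, z⟩
  simp

end Orbital

end

theorem block_transitive_subdegree_divisibility_general
    (P : Type*) [Fintype P] [DecidableEq P]
    (𝓑 : Finset (Finset P)) (v k : ℕ)
    (hv : Fintype.card P = v)
    (hk3 : 3 ≤ k) (hkv : k ≤ v)
    (hblocks : ∀ b ∈ 𝓑, b.card = k)
    (hdesign : ∀ s : Finset P, s.card = 3 →
      (𝓑.filter (fun b => s ⊆ b)).card = 1)
    (G : Type*) [Group G] [MulAction G P]
    (htrans : ∀ b₁ ∈ 𝓑, ∀ b₂ ∈ 𝓑, ∃ g : G, b₁.image (fun x => g • x) = b₂)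
    (α β : P) :
    (v - 1) * (v - 2) ∣
      k * (k - 1) * (k - 2) *
        (MulAction.orbit (MulAction.stabilizer G α) β).ncard *
        ((MulAction.orbit (MulAction.stabilizer G α) β).ncard - 1) := by
  have hD : IsSteinerSystem 3 k 𝓑 := ⟨hblocks, hdesign⟩
  subst hv
  set d := (orbit (stabilizer G α) β).ncard
  obtain rfl | hkv := hkv.eq_or_lt
  · exact Dvd.intro (Fintype.card P * d * (d - 1)) (by ring)
  obtain rfl | hβα := eq_or_ne β α
  · have hd : d = 1 := Set.ncard_eq_one.2 ⟨β, Set.eq_singleton_iff_unique_mem.2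
      ⟨mem_orbit_self β, fun _ ⟨s, hs⟩ => hs ▸ s.2⟩⟩
    simp [hd]
  have := hD.isPretransitive hk3 hkv htrans
  obtain ⟨b, hb⟩ := hD.nonempty (by omega)
  have hT := hD.card_eq_card_mul_card_inter htrans (fun g _ => smul_mem_orbitalForks g)
    (fun _ => pairwise_ne_of_mem_orbitalForks hβα.symm) hb
  rw [card_orbitalForks] at hT
  set n := #(orbitalForks G α β ∩ b ×ˢ b ×ˢ b)
  refine ⟨n, Nat.eq_of_mul_eq_mul_left (show 0 < Fintype.card P by omega) ?_⟩
  calc Fintype.card P * (k * (k - 1) * (k - 2) * d * (d - 1))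
      = Fintype.card P * (d * (d - 1)) * (k * (k - 1) * (k - 2)) := by ring
    _ = n * (#𝓑 * (k * (k - 1) * (k - 2))) := by rw [hT]; ring
    _ = Fintype.card P * ((Fintype.card P - 1) * (Fintype.card P - 2) * n) := by
      rw [hD.card_mul]; ring

/-- For a `G`-block-transitive `3`-`(v,k,1)` design, `(v-1)(v-2)` divides
`k(k-1)(k-2)·d(d-1)` for every nontrivial subdegree `d` of `G` on the points. -/
theorem block_transitive_subdegree_divisibility
    (P : Type*) [Fintype P] [DecidableEq P]
    (𝓑 : Finset (Finset P)) (v k : ℕ)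
    (hv : Fintype.card P = v)
    (hk3 : 3 ≤ k) (hkv : k ≤ v)
    (hblocks : ∀ b ∈ 𝓑, b.card = k)
    (hdesign : ∀ s : Finset P, s.card = 3 →
      (𝓑.filter (fun b => s ⊆ b)).card = 1)
    (G : Type*) [Group G] [Finite G] [MulAction G P] [FaithfulSMul G P]
    (hpres : ∀ (g : G), ∀ b ∈ 𝓑, b.image (fun x => g • x) ∈ 𝓑)
    (htrans : ∀ b₁ ∈ 𝓑, ∀ b₂ ∈ 𝓑, ∃ g : G, b₁.image (fun x => g • x) = b₂)
    (α β : P) (hnt : MulAction.orbit (MulAction.stabilizer G α) β ≠ {α}) :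
    (v - 1) * (v - 2) ∣
      k * (k - 1) * (k - 2) *
        (MulAction.orbit (MulAction.stabilizer G α) β).ncard *
        ((MulAction.orbit (MulAction.stabilizer G α) β).ncard - 1) :=
  block_transitive_subdegree_divisibility_general P 𝓑 v k hv hk3 hkv hblocks hdesign G htrans α β
end

section
/- Let n, m be positive integers with n ≥ 5 and n ≥ 2m+1, and let Ω be the set of m-subsets of {1,...,n}. Then the alternating group A_n acting naturally on Ω has the same suborbits as S_n: for α ∈ Ω, the (A_n)_α-orbits on Ω are precisely the sets Δ_i = {β : |α ∩ β| = i} for 0 ≤ i ≤ m, so A_n has m+1 suborbits with nontrivial subdegrees C(m,i)·C(n-m,m-i) for 0 ≤ i ≤ m-1. -/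
/-!
Two `m`-sets `β, γ` with `|α ∩ β| = |α ∩ γ|` are related by a permutation stabilizing `α`, built
separately on `α` and on its complement. If that permutation is odd, compose it with the
transposition of two points in the same cell of the partition cut out by `α` and `β`: there are at
most four cells and `n ≥ 5` points. Hence the `(A_n)_α`-orbits are the sets `Δ_i`, each nonempty
for `i ≤ m` because `n ≥ 2m`; their sizes are counted by splitting `β` into `α ∩ β` and `β \ α`.
-/

open Finset Equiv

section

variable {X : Type*} [DecidableEq X]

theorem Equiv.swap_apply_mem_iff {s : Finset X} {a b : X} (h : a ∈ s ↔ b ∈ s) (x : X) :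
    swap a b x ∈ s ↔ x ∈ s := by
  rw [swap_apply_def]
  split_ifs <;> simp_all

theorem Finset.image_eq_of_forall_mem_iff {g : Perm X} {s t : Finset X}
    (h : ∀ x, g x ∈ t ↔ x ∈ s) : s.image g = t := by
  ext y
  refine ⟨fun hy => ?_, fun hy => mem_image.2 ⟨g.symm y, (h _).1 (by simpa using hy), by simp⟩⟩
  obtain ⟨x, hx, rfl⟩ := mem_image.1 hy
  exact (h x).2 hx

end

variable {X : Type*} [Fintype X] [DecidableEq X]

theorem Finset.exists_perm_mem_iff_of_card_eq {s t : Finset X} (h : #s = #t) :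
    ∃ g : Perm X, ∀ x, g x ∈ t ↔ x ∈ s := by
  refine ⟨(equivOfCardEq h).extendSubtype, fun x => ?_⟩
  by_cases hx : x ∈ s
  · exact iff_of_true (extendSubtype_mem _ x hx) hx
  · exact iff_of_false (extendSubtype_not_mem _ x hx) hx

theorem Finset.exists_perm_mem_iff_of_card_inter_eq {α β γ : Finset X} (hβγ : #β = #γ)
    (h : #(α ∩ β) = #(α ∩ γ)) :
    ∃ g : Perm X, (∀ x, g x ∈ α ↔ x ∈ α) ∧ (∀ x, g x ∈ γ ↔ x ∈ β) := by
  have hin : #(β.subtype (· ∈ α)) = #(γ.subtype (· ∈ α)) := by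
    simpa only [card_subtype, filter_mem_eq_inter, inter_comm _ α] using h
  have hout : #(β.subtype (· ∉ α)) = #(γ.subtype (· ∉ α)) := by
    simp only [card_subtype, filter_notMem_eq_sdiff, card_sdiff, hβγ, h]
  obtain ⟨gin, hgin⟩ := exists_perm_mem_iff_of_card_eq hin
  obtain ⟨gout, hgout⟩ := exists_perm_mem_iff_of_card_eq hout
  refine ⟨gin.subtypeCongr gout, fun x => ?_, fun x => ?_⟩ <;> by_cases hx : x ∈ α
  · exact iff_of_true (by simp [Perm.subtypeCongr.left_apply _ _ hx]) hx
  · exact iff_of_false (by simpa [Perm.subtypeCongr.right_apply _ _ hx] using (gout ⟨x, hx⟩).2) hx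
  · simpa [Perm.subtypeCongr.left_apply _ _ hx] using hgin ⟨x, hx⟩
  · simpa [Perm.subtypeCongr.right_apply _ _ hx] using hgout ⟨x, hx⟩

theorem Finset.exists_mem_alternatingGroup_mem_iff_of_card_inter_eq (hX : 4 < Fintype.card X)
    {α β γ : Finset X} (hβγ : #β = #γ) (h : #(α ∩ β) = #(α ∩ γ)) :
    ∃ g ∈ alternatingGroup X, (∀ x, g x ∈ α ↔ x ∈ α) ∧ (∀ x, g x ∈ γ ↔ x ∈ β) := by
  obtain ⟨g, hgα, hgβ⟩ := exists_perm_mem_iff_of_card_inter_eq hβγ h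
  rcases Int.units_eq_one_or (Perm.sign g) with hs | hs
  · exact ⟨g, Perm.mem_alternatingGroup.2 hs, hgα, hgβ⟩
  obtain ⟨a, b, hab, hcell⟩ := Fintype.exists_ne_map_eq_of_card_lt
    (fun x : X => (x ∈ α, x ∈ β)) (by simpa using hX)
  simp only [Prod.mk.injEq] at hcell
  refine ⟨g * swap a b, Perm.mem_alternatingGroup.2 ?_, fun x => ?_, fun x => ?_⟩
  · rw [map_mul, hs, Perm.sign_swap hab]; decide
  · rw [Perm.mul_apply, hgα, swap_apply_mem_iff (Iff.of_eq hcell.1)]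
  · rw [Perm.mul_apply, hgβ, swap_apply_mem_iff (Iff.of_eq hcell.2)]

theorem Finset.exists_mem_alternatingGroup_image_eq_iff (hX : 4 < Fintype.card X)
    {α β γ : Finset X} (hβγ : #β = #γ) :
    (∃ g ∈ alternatingGroup X, α.image g = α ∧ β.image g = γ) ↔ #(α ∩ β) = #(α ∩ γ) := by
  constructor
  · rintro ⟨g, -, hgα, hgβ⟩
    rw [← card_image_of_injective _ g.injective, image_inter _ _ g.injective, hgα, hgβ]
  · intro h
    obtain ⟨g, hg, hgα, hgβ⟩ := exists_mem_alternatingGroup_mem_iff_of_card_inter_eq hX hβγ h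
    exact ⟨g, hg, image_eq_of_forall_mem_iff hgα, image_eq_of_forall_mem_iff hgβ⟩

theorem Finset.card_filter_card_inter_eq {α : Finset X} {a k i : ℕ} (hα : #α = a) (hik : i ≤ k) :
    #{β ∈ univ.powersetCard k | #(α ∩ β) = i} =
      a.choose i * (Fintype.card X - a).choose (k - i) := by
  have hsplit {u v : Finset X} (hu : u ⊆ α) (hv : v ⊆ αᶜ) :
      α ∩ (u ∪ v) = u ∧ (u ∪ v) \ α = v ∧ #(u ∪ v) = #u + #v := by
    refine ⟨?_, ?_, card_union_of_disjoint (disjoint_compl_right.mono hu hv)⟩ <;>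
    · ext x
      have := @hu x
      have := @hv x
      simp only [mem_inter, mem_union, mem_sdiff, mem_compl] at *
      tauto
  rw [← hα, ← card_compl, ← card_powersetCard, ← card_powersetCard, ← card_product]
  refine card_bij' (fun β _ => (α ∩ β, β \ α)) (fun p _ => p.1 ∪ p.2) ?_ ?_ ?_ ?_
  · intro β hβ
    simp only [mem_filter, mem_powersetCard] at hβ
    simp only [mem_product, mem_powersetCard]
    refine ⟨⟨inter_subset_left, hβ.2⟩, fun x hx => mem_compl.2 (mem_sdiff.1 hx).2, ?_⟩
    rw [card_sdiff, hβ.1.2, hβ.2]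
  · rintro ⟨u, v⟩ huv
    simp only [mem_product, mem_powersetCard] at huv
    obtain ⟨hinter, -, hcard⟩ := hsplit huv.1.1 huv.2.1
    simp only [mem_filter, mem_powersetCard]
    refine ⟨⟨subset_univ _, ?_⟩, by rw [hinter, huv.1.2]⟩
    rw [hcard, huv.1.2, huv.2.2]
    omega
  · intro β _
    exact (congrArg₂ (· ∪ ·) (inter_comm α β) rfl).trans (sup_inf_sdiff β α)
  · rintro ⟨u, v⟩ huv
    simp only [mem_product, mem_powersetCard] at huv
    obtain ⟨hinter, hdiff, -⟩ := hsplit huv.1.1 huv.2.1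
    rw [hinter, hdiff]

theorem Finset.exists_card_eq_card_inter_eq {α : Finset X} {m i : ℕ} (hα : #α = m)
    (hm : 2 * m ≤ Fintype.card X) (hi : i ≤ m) : ∃ β : Finset X, #β = m ∧ #(α ∩ β) = i := by
  have hpos := card_filter_card_inter_eq hα hi ▸
    Nat.mul_pos (Nat.choose_pos hi) (Nat.choose_pos (by omega : m - i ≤ Fintype.card X - m))
  obtain ⟨β, hβ⟩ := card_pos.1 hpos
  simp only [mem_filter, mem_powersetCard] at hβ
  exact ⟨β, hβ.1.2, hβ.2⟩

theorem Finset.ncard_setOf_card_inter_eq {α : Finset X} {m : ℕ} (hα : #α = m)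
    (hm : 2 * m ≤ Fintype.card X) :
    {S : Set (Finset X) | ∃ β : Finset X, #β = m ∧
      S = {γ | #γ = m ∧ #(α ∩ β) = #(α ∩ γ)}}.ncard = m + 1 := by
  let Δ (i : ℕ) : Set (Finset X) := {γ | #γ = m ∧ i = #(α ∩ γ)}
  have hset : {S : Set (Finset X) | ∃ β : Finset X, #β = m ∧
      S = {γ | #γ = m ∧ #(α ∩ β) = #(α ∩ γ)}} = Δ '' Set.Iic m := by
    ext S
    constructor
    · rintro ⟨β, -, rfl⟩
      exact ⟨#(α ∩ β), hα ▸ card_le_card inter_subset_left, rfl⟩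
    · rintro ⟨i, hi, rfl⟩
      obtain ⟨β, hβ, rfl⟩ := exists_card_eq_card_inter_eq hα hm hi
      exact ⟨β, hβ, rfl⟩
  have hinj : Set.InjOn Δ (Set.Iic m) := by
    intro i hi j _ hij
    obtain ⟨β, hβ, rfl⟩ := exists_card_eq_card_inter_eq hα hm hi
    have hβj : β ∈ Δ j := hij ▸ ⟨hβ, rfl⟩
    exact hβj.2.symm
  rw [hset, hinj.ncard_image, ← coe_Iic, Set.ncard_coe_finset, Nat.card_Iic]

theorem alternating_subsets_suborbits_general
    (n m : ℕ) (hn : 5 ≤ n) (hnm : 2 * m + 1 ≤ n)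
    (α : Finset (Fin n)) (hα : α.card = m) :
    (∀ β γ : Finset (Fin n), β.card = m → γ.card = m →
      ((∃ g ∈ alternatingGroup (Fin n), α.image g = α ∧ β.image g = γ) ↔
        (α ∩ β).card = (α ∩ γ).card)) ∧
    {S : Set (Finset (Fin n)) | ∃ β : Finset (Fin n), β.card = m ∧
      S = {γ | γ.card = m ∧ ∃ g ∈ alternatingGroup (Fin n),
        α.image g = α ∧ β.image g = γ}}.ncard = m + 1 ∧
    (∀ i < m,
      ((Finset.univ.powersetCard m).filter (fun β => (α ∩ β).card = i)).card =
        Nat.choose m i * Nat.choose (n - m) (m - i)) := by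
  have hX : 4 < Fintype.card (Fin n) := by rw [Fintype.card_fin]; omega
  have hsuborbit (β γ : Finset (Fin n)) (hβ : #β = m) (hγ : #γ = m) :
      (∃ g ∈ alternatingGroup (Fin n), α.image g = α ∧ β.image g = γ) ↔ #(α ∩ β) = #(α ∩ γ) :=
    exists_mem_alternatingGroup_image_eq_iff hX (hβ.trans hγ.symm)
  refine ⟨hsuborbit, ?_, fun i hi => by simpa using card_filter_card_inter_eq hα hi.le⟩
  rw [← ncard_setOf_card_inter_eq hα (by rw [Fintype.card_fin]; omega)]
  congr 1
  ext S
  refine exists_congr fun β => and_congr_right fun hβ => ?_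
  rw [Set.ext fun γ => and_congr_right fun hγ => hsuborbit β γ hβ hγ]

/-- Suborbits of `A_n` acting on `m`-subsets of `{1,…,n}` (`n ≥ 5`, `n ≥ 2m+1`)
coincide with those of `S_n`: the `(A_n)_α`-orbits are the sets
`Δ_i = {β : |α ∩ β| = i}` for `0 ≤ i ≤ m`, so there are `m+1` suborbits, with
nontrivial subdegrees `C(m,i)·C(n-m,m-i)` for `0 ≤ i ≤ m-1`. -/
theorem alternating_subsets_suborbits
    (n m : ℕ) (hn : 5 ≤ n) (hnm : 2 * m + 1 ≤ n) (hm : 1 ≤ m)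
    (α : Finset (Fin n)) (hα : α.card = m) :
    (∀ β γ : Finset (Fin n), β.card = m → γ.card = m →
      ((∃ g ∈ alternatingGroup (Fin n), α.image g = α ∧ β.image g = γ) ↔
        (α ∩ β).card = (α ∩ γ).card)) ∧
    {S : Set (Finset (Fin n)) | ∃ β : Finset (Fin n), β.card = m ∧
      S = {γ | γ.card = m ∧ ∃ g ∈ alternatingGroup (Fin n),
        α.image g = α ∧ β.image g = γ}}.ncard = m + 1 ∧
    (∀ i < m,
      ((Finset.univ.powersetCard m).filter (fun β => (α ∩ β).card = i)).card =
        Nat.choose m i * Nat.choose (n - m) (m - i)) :=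
  alternating_subsets_suborbits_general n m hn hnm α hα
end

section
/- Let m ≥ 3 and let Ω be the set of partitions of {1,...,2m} into 2 blocks of size m, with S_{2m} acting naturally. Fix α ∈ Ω. Then the nontrivial orbits of the stabilizer (S_{2m})_α on Ω are the sets Δ_i for 1 ≤ i ≤ ⌊m/2⌋, where Δ_i consists of those partitions {W_1, W_2} with {|V_1 ∩ W_1|, |V_1 ∩ W_2|} = {i, m-i} for α = {V_1, V_2}, and |Δ_i| = 2^{-⌊2i/m⌋}·(m!/((m-i)!·i!))². In particular S_{2m} has ⌊m/2⌋ + 1 suborbits on Ω. -/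
/-!
A half partition is `{W, Wᶜ}` with `#W = m`, and a permutation stabilising `α = {V₁, V₁ᶜ}`
either fixes or swaps `V₁` and `V₁ᶜ`; hence the unordered pair `{#(V₁ ∩ W), m - #(V₁ ∩ W)}` is
invariant under the stabiliser. It is a complete invariant: a permutation can be prescribed
independently on the four cells `V₁ ∩ W`, `V₁ \ W`, `W \ V₁`, `(V₁ ∪ W)ᶜ`, so two partitions
with the same pair are related by one fixing `V₁`. The suborbits are therefore the sets `Δ_i`,
`0 ≤ i ≤ ⌊m/2⌋`, with `Δ_0 = {α}`. As for their sizes, there are `C(m, i) · C(m, m - i)` blocks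
`W` with `#(V₁ ∩ W) = i`, and a partition in `Δ_i` contains exactly one of them, or two when
`2 i = m`.
-/

open Finset

/-- A partition of `{1,…,2m}` into `2` blocks of size `m`, encoded as a finset
of blocks. -/
def IsHalfPartition (m : ℕ) (Pt : Finset (Finset (Fin (2 * m)))) : Prop :=
  Pt.card = 2 ∧ (∀ V ∈ Pt, V.card = m) ∧ ∀ x : Fin (2 * m), ∃ V ∈ Pt, x ∈ V

section PermFinset

variable {ι : Type*} [DecidableEq ι]

theorem Finset.image_perm_eq_of_forall_mem_iff {σ : Equiv.Perm ι} {s t : Finset ι}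
    (h : ∀ a, σ a ∈ t ↔ a ∈ s) : s.image σ = t := by
  ext b
  obtain ⟨a, rfl⟩ := σ.surjective b
  simp [σ.injective.eq_iff, h]

theorem Finset.image_perm_compl [Fintype ι] (σ : Equiv.Perm ι) (s : Finset ι) :
    sᶜ.image σ = (s.image σ)ᶜ :=
  image_perm_eq_of_forall_mem_iff fun a => by simp [σ.injective.eq_iff]

variable [Fintype ι]

omit [DecidableEq ι] in
theorem Equiv.Perm.exists_comp_eq_of_card_fiber_eq {β : Type*} [DecidableEq β] {f g : ι → β}
    (h : ∀ b, #{a | f a = b} = #{a | g a = b}) : ∃ σ : Equiv.Perm ι, ∀ a, g (σ a) = f a :=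
  ⟨Equiv.ofFiberEquiv fun b =>
      Fintype.equivOfCardEq (by simpa only [Fintype.card_subtype] using h b),
    Equiv.ofFiberEquiv_map _⟩

theorem Finset.card_inter_compl (s t : Finset ι) : #(s ∩ tᶜ) = #s - #(s ∩ t) := by
  rw [← sdiff_eq_inter_compl, card_sdiff, inter_comm]

theorem Finset.card_compl_inter (s t : Finset ι) : #(sᶜ ∩ t) = #t - #(s ∩ t) := by
  rw [inter_comm, card_inter_compl, inter_comm]

theorem Equiv.Perm.exists_image_eq_self_and_image_eq {V W X : Finset ι}
    (hVW : #(V ∩ W) = #(V ∩ X)) (hWX : #W = #X) :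
    ∃ σ : Equiv.Perm ι, V.image σ = V ∧ W.image σ = X := by
  -- The four fibres are `V ∩ W`, `V \ W`, `W \ V` and `(V ∪ W)ᶜ`, whose sizes are
  -- determined by `#V`, `#W` and `#(V ∩ W)`.
  have hfibres : ∀ b : Bool × Bool, #{a | (decide (a ∈ V), decide (a ∈ W)) = b} =
      #{a | (decide (a ∈ V), decide (a ∈ X)) = b} := by
    have hW := card_union_add_card_inter W V
    have hX := card_union_add_card_inter X V
    rw [inter_comm V W, inter_comm V X] at hVW
    rintro ⟨_ | _, _ | _⟩ <;>
      simp only [Prod.mk.injEq, decide_eq_true_eq, decide_eq_false_iff_not, filter_and,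
        filter_not, subset_univ, filter_mem_eq_of_subset, ← compl_eq_univ_sdiff,
        ← sdiff_eq_inter_compl, card_sdiff, card_compl, inter_comm _ W, inter_comm _ X] <;>
      omega
  obtain ⟨σ, hσ⟩ := exists_comp_eq_of_card_fiber_eq hfibres
  simp only [Prod.ext_iff, decide_eq_decide] at hσ
  exact ⟨σ, image_perm_eq_of_forall_mem_iff fun a => (hσ a).1,
    image_perm_eq_of_forall_mem_iff fun a => (hσ a).2⟩

theorem Finset.card_filter_card_inter_eq_and_card_sdiff_eq (s : Finset ι) (i j : ℕ) :
    #{t : Finset ι | #(s ∩ t) = i ∧ #(t \ s) = j} = (#s).choose i * (#sᶜ).choose j := by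
  rw [← card_powersetCard, ← card_powersetCard, ← card_product]
  have hsplit : ∀ {A B : Finset ι}, A ⊆ s → B ⊆ sᶜ → s ∩ (A ∪ B) = A ∧ (A ∪ B) \ s = B := by
    intro A B hA hB
    constructor <;> ext x <;> have := @hA x <;> have := @hB x <;>
      simp only [mem_inter, mem_union, mem_sdiff, mem_compl] at * <;> tauto
  refine card_nbij' (fun t => (s ∩ t, t \ s)) (fun p => p.1 ∪ p.2) ?_ ?_ ?_ ?_
  · intro t
    simp only [coe_filter, mem_univ, true_and, Set.mem_ofPred_eq, mem_coe, mem_product,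
      mem_powersetCard]
    rintro ⟨rfl, rfl⟩
    exact ⟨⟨inter_subset_left, rfl⟩, fun x hx => by simp_all, rfl⟩
  · rintro ⟨A, B⟩
    simp only [mem_coe, mem_product, mem_powersetCard, coe_filter, mem_univ, true_and,
      Set.mem_ofPred_eq]
    rintro ⟨⟨hA, rfl⟩, hB, rfl⟩
    rw [(hsplit hA hB).1, (hsplit hA hB).2]
    exact ⟨rfl, rfl⟩
  · intro t _
    simp only [inter_comm s t]
    exact (union_comm _ _).trans (sdiff_union_inter t s)
  · rintro ⟨A, B⟩
    simp only [mem_coe, mem_product, mem_powersetCard]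
    rintro ⟨⟨hA, -⟩, hB, -⟩
    rw [(hsplit hA hB).1, (hsplit hA hB).2]

end PermFinset

namespace IsHalfPartition

variable {m : ℕ} {β : Finset (Finset (Fin (2 * m)))} {V W : Finset (Fin (2 * m))}

theorem eq_pair (hβ : IsHalfPartition m β) (hW : W ∈ β) : β = {W, Wᶜ} := by
  obtain ⟨a, b, -, rfl⟩ := card_eq_two.1 hβ.1
  have hcover : b ∪ a = univ := eq_univ_of_forall fun x => by
    obtain ⟨V, hV, hx⟩ := hβ.2.2 x
    rcases mem_insert.1 hV with rfl | hV
    · exact mem_union_right _ hx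
    · exact mem_union_left _ (mem_singleton.1 hV ▸ hx)
  have hdisj : Disjoint b a := by
    rw [← card_union_eq_card_add_card, hcover, card_univ, Fintype.card_fin,
      hβ.2.1 a (by simp), hβ.2.1 b (by simp), two_mul]
  obtain rfl : b = aᶜ := eq_compl_iff_isCompl.2 ⟨hdisj, codisjoint_iff.2 hcover⟩
  rcases mem_insert.1 hW with rfl | hW
  · rfl
  · rw [mem_singleton.1 hW, compl_compl, pair_comm]

theorem mem_iff_pair_eq (hβ : IsHalfPartition m β) : W ∈ β ↔ {W, Wᶜ} = β :=
  ⟨fun hW => (hβ.eq_pair hW).symm, fun h => h ▸ mem_insert_self _ _⟩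

theorem exists_mem_card_inter_eq_iff (hβ : IsHalfPartition m β) (hW : W ∈ β) (hV : #V = m)
    {j : ℕ} : (∃ W' ∈ β, #(V ∩ W') = j) ↔ j = #(V ∩ W) ∨ j = m - #(V ∩ W) := by
  rw [hβ.eq_pair hW]
  simp [card_inter_compl, hV, eq_comm]

theorem card_filter_card_inter_eq (hm : 0 < m) (hβ : IsHalfPartition m β) (hW : W ∈ β)
    (hV : #V = m) {i : ℕ} (hWi : #(V ∩ W) = i) (hi : 2 * i ≤ m) :
    #{W' ∈ β | #(V ∩ W') = i} = 2 ^ (2 * i / m) := by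
  have : Nonempty (Fin (2 * m)) := ⟨⟨0, by omega⟩⟩
  rw [hβ.eq_pair hW, filter_insert, if_pos hWi, filter_singleton, card_inter_compl, hV, hWi]
  by_cases h : 2 * i = m
  · rw [if_pos (by omega), card_pair ne_compl_self, h, Nat.div_self hm, pow_one]
  · rw [if_neg (by omega), insert_empty, card_singleton, Nat.div_eq_of_lt (by omega), pow_zero]

end IsHalfPartition

theorem isHalfPartition_pair {m : ℕ} (hm : 0 < m) {W : Finset (Fin (2 * m))} (hW : #W = m) :
    IsHalfPartition m {W, Wᶜ} := by
  have : Nonempty (Fin (2 * m)) := ⟨⟨0, by omega⟩⟩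
  refine ⟨card_pair ne_compl_self, ?_, fun x => ?_⟩
  · intro V hV
    rcases mem_insert.1 hV with rfl | hV
    · exact hW
    · rw [mem_singleton.1 hV, card_compl, Fintype.card_fin, hW]
      omega
  · by_cases hx : x ∈ W
    exacts [⟨W, mem_insert_self _ _, hx⟩, ⟨Wᶜ, by simp, mem_compl.2 hx⟩]

section Suborbits

variable {m : ℕ} {α : Finset (Finset (Fin (2 * m)))} {V₁ : Finset (Fin (2 * m))}

/-- The paper's `Δ_i`, for `i` ranging over `0, …, m`; note `Δ_i = Δ_{m-i}`. -/
def delta (V : Finset (Fin (2 * m))) (i : ℕ) : Set (Finset (Finset (Fin (2 * m)))) :=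
  {β | IsHalfPartition m β ∧ ∃ W ∈ β, #(V ∩ W) = i}

def stabilizerOrbit (α β : Finset (Finset (Fin (2 * m)))) : Set (Finset (Finset (Fin (2 * m)))) :=
  {γ | IsHalfPartition m γ ∧ ∃ g : Equiv.Perm (Fin (2 * m)),
    α.image (fun V => V.image g) = α ∧ β.image (fun V => V.image g) = γ}

theorem exists_perm_iff_exists_card_inter_eq (hα : IsHalfPartition m α) (hV₁ : V₁ ∈ α)
    {β γ : Finset (Finset (Fin (2 * m)))} (hβ : IsHalfPartition m β) (hγ : IsHalfPartition m γ) :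
    (∃ g : Equiv.Perm (Fin (2 * m)),
        α.image (fun V => V.image g) = α ∧ β.image (fun V => V.image g) = γ) ↔
      ∃ j, (∃ W ∈ β, #(V₁ ∩ W) = j) ∧ ∃ W ∈ γ, #(V₁ ∩ W) = j := by
  have hV₁m : #V₁ = m := hα.2.1 V₁ hV₁
  constructor
  · rintro ⟨g, hgα, hgβ⟩
    obtain ⟨W, hW⟩ : β.Nonempty := card_pos.1 (by rw [hβ.1]; norm_num)
    have hgW : W.image g ∈ γ := hgβ ▸ mem_image_of_mem _ hW
    obtain ⟨V, hV, hgV⟩ := mem_image.1 (hgα.symm ▸ hV₁ : V₁ ∈ α.image _)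
    have hcard : #(V₁ ∩ W.image g) = #(V ∩ W) := by
      rw [← hgV, ← image_inter _ _ g.injective, card_image_of_injective _ g.injective]
    refine ⟨#(V₁ ∩ W), ⟨W, hW, rfl⟩, (hγ.exists_mem_card_inter_eq_iff hgW hV₁m).2 ?_⟩
    rw [hcard]
    -- `g` either fixes `V₁` or maps `V₁ᶜ` onto it
    rcases mem_insert.1 (hα.eq_pair hV₁ ▸ hV) with rfl | hV
    · exact Or.inl rfl
    · have hWm : #W = m := hβ.2.1 W hW
      have hle : #(V₁ ∩ W) ≤ m := (card_le_card inter_subset_left).trans_eq hV₁m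
      rw [mem_singleton.1 hV, card_compl_inter, hWm]
      omega
  · rintro ⟨j, ⟨W, hW, rfl⟩, W', hW', hW'j⟩
    obtain ⟨σ, hσV, hσW⟩ := Equiv.Perm.exists_image_eq_self_and_image_eq hW'j.symm
      ((hβ.2.1 W hW).trans (hγ.2.1 W' hW').symm)
    refine ⟨σ, ?_, ?_⟩
    · rw [hα.eq_pair hV₁]
      simp only [image_insert, image_singleton, image_perm_compl, hσV]
    · rw [hβ.eq_pair hW, hγ.eq_pair hW']
      simp only [image_insert, image_singleton, image_perm_compl, hσW]

theorem stabilizerOrbit_eq_delta (hα : IsHalfPartition m α) (hV₁ : V₁ ∈ α)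
    {β : Finset (Finset (Fin (2 * m)))} (hβ : IsHalfPartition m β) {W : Finset (Fin (2 * m))}
    (hW : W ∈ β) : stabilizerOrbit α β = delta V₁ #(V₁ ∩ W) := by
  have hV₁m : #V₁ = m := hα.2.1 V₁ hV₁
  ext γ
  refine and_congr_right fun hγ => ?_
  rw [exists_perm_iff_exists_card_inter_eq hα hV₁ hβ hγ]
  refine ⟨?_, fun h => ⟨_, ⟨W, hW, rfl⟩, h⟩⟩
  rintro ⟨j, hjβ, W', hW', rfl⟩
  rw [hβ.exists_mem_card_inter_eq_iff hW hV₁m] at hjβ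
  rw [hγ.exists_mem_card_inter_eq_iff hW' hV₁m]
  have hle : #(V₁ ∩ W) ≤ m := (card_le_card inter_subset_left).trans_eq hV₁m
  have hle' : #(V₁ ∩ W') ≤ m := (card_le_card inter_subset_left).trans_eq hV₁m
  omega

theorem card_filter_card_eq_and_card_inter_eq (hV₁m : #V₁ = m) {i : ℕ} (hi : i ≤ m) :
    #{W : Finset (Fin (2 * m)) | #W = m ∧ #(V₁ ∩ W) = i} = m.choose i ^ 2 := by
  have hsplit : ({W | #W = m ∧ #(V₁ ∩ W) = i} : Finset (Finset (Fin (2 * m)))) =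
      ({W | #(V₁ ∩ W) = i ∧ #(W \ V₁) = m - i} : Finset _) := filter_congr fun W _ => by
    have := card_inter_add_card_sdiff W V₁
    rw [inter_comm] at this
    omega
  rw [hsplit, card_filter_card_inter_eq_and_card_sdiff_eq, card_compl, Fintype.card_fin, hV₁m,
    show 2 * m - m = m by omega, Nat.choose_symm hi, sq]

theorem ncard_delta_mul (hm : 0 < m) (hV₁m : #V₁ = m) {i : ℕ} (hi : 2 * i ≤ m) :
    (delta V₁ i).ncard * 2 ^ (2 * i / m) = m.choose i ^ 2 := by
  classical
  let blocks : Finset (Finset (Fin (2 * m))) := {W | #W = m ∧ #(V₁ ∩ W) = i}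
  have hmaps : ∀ W ∈ blocks, ({W, Wᶜ} : Finset _) ∈ (delta V₁ i).toFinset := fun W hW => by
    simp only [blocks, mem_filter, mem_univ, true_and] at hW
    exact Set.mem_toFinset.2 ⟨isHalfPartition_pair hm hW.1, W, mem_insert_self _ _, hW.2⟩
  -- each `β ∈ Δ_i` is `{W, Wᶜ}` for one block `W`, or for two when `2 i = m`
  have hfibre : ∀ β ∈ (delta V₁ i).toFinset,
      #{W ∈ blocks | {W, Wᶜ} = β} = 2 ^ (2 * i / m) := by
    intro β hβΔ
    obtain ⟨hβ, W, hW, hWi⟩ := Set.mem_toFinset.1 hβΔ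
    rw [← hβ.card_filter_card_inter_eq hm hW hV₁m hWi hi]
    congr 1
    ext W'
    simp only [blocks, mem_filter, mem_univ, true_and, ← hβ.mem_iff_pair_eq]
    exact ⟨fun h => ⟨h.2, h.1.2⟩, fun h => ⟨⟨hβ.2.1 W' h.1, h.2⟩, h.1⟩⟩
  rw [← card_filter_card_eq_and_card_inter_eq hV₁m (by omega), card_eq_sum_card_fiberwise hmaps,
    sum_congr rfl hfibre, sum_const, smul_eq_mul, Set.ncard_eq_toFinset_card']

theorem delta_nonempty (hm : 0 < m) (hV₁m : #V₁ = m) {i : ℕ} (hi : 2 * i ≤ m) :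
    (delta V₁ i).Nonempty := by
  refine Set.nonempty_of_ncard_ne_zero fun h => ?_
  have := ncard_delta_mul hm hV₁m hi
  rw [h, zero_mul, eq_comm] at this
  exact pow_ne_zero 2 (Nat.choose_pos (by omega)).ne' this

theorem delta_injOn (hm : 0 < m) (hV₁m : #V₁ = m) : Set.InjOn (delta V₁) (Set.Iic (m / 2)) := by
  intro i hi j hj hij
  rw [Set.mem_Iic] at hi hj
  obtain ⟨β, hβ, W, hW, rfl⟩ := delta_nonempty hm hV₁m (i := i) (by omega)
  have hβj : β ∈ delta V₁ j := hij ▸ ⟨hβ, W, hW, rfl⟩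
  rw [delta, Set.mem_ofPred_eq, hβ.exists_mem_card_inter_eq_iff hW hV₁m] at hβj
  omega

theorem setOf_stabilizerOrbit_eq_image_delta (hm : 0 < m) (hα : IsHalfPartition m α)
    (hV₁ : V₁ ∈ α) :
    {S | ∃ β, IsHalfPartition m β ∧ S = stabilizerOrbit α β} = delta V₁ '' Set.Iic (m / 2) := by
  have hV₁m : #V₁ = m := hα.2.1 V₁ hV₁
  ext S
  constructor
  · rintro ⟨β, hβ, rfl⟩
    obtain ⟨W, hW⟩ : β.Nonempty := card_pos.1 (by rw [hβ.1]; norm_num)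
    have hWc : Wᶜ ∈ β := hβ.eq_pair hW ▸ mem_insert_of_mem (mem_singleton_self _)
    have hWcard := card_inter_compl V₁ W
    have hle : #(V₁ ∩ W) ≤ m := (card_le_card inter_subset_left).trans_eq hV₁m
    by_cases h : 2 * #(V₁ ∩ W) ≤ m
    · exact ⟨_, Set.mem_Iic.2 (by omega), (stabilizerOrbit_eq_delta hα hV₁ hβ hW).symm⟩
    · exact ⟨_, Set.mem_Iic.2 (by omega), (stabilizerOrbit_eq_delta hα hV₁ hβ hWc).symm⟩
  · rintro ⟨i, hi, rfl⟩
    obtain ⟨β, hβ, W, hW, rfl⟩ := delta_nonempty hm hV₁m (i := i) (by rw [Set.mem_Iic] at hi; omega)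
    exact ⟨β, hβ, (stabilizerOrbit_eq_delta hα hV₁ hβ hW).symm⟩

end Suborbits

/-- Suborbits of `S_{2m}` (`m ≥ 3`) acting on partitions of `{1,…,2m}` into two
blocks of size `m`: the nontrivial orbits of the stabilizer of `α = {V₁,V₂}` are
the sets `Δ_i` (`1 ≤ i ≤ ⌊m/2⌋`) of partitions `{W₁,W₂}` with
`{|V₁∩W₁|,|V₁∩W₂|} = {i,m-i}`, of size `2^{-⌊2i/m⌋}·C(m,i)²`; in particular
there are `⌊m/2⌋ + 1` suborbits. -/
theorem symmetric_half_partitions_suborbits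
    (m : ℕ) (hm : 3 ≤ m)
    (α : Finset (Finset (Fin (2 * m)))) (hα : IsHalfPartition m α)
    (V₁ : Finset (Fin (2 * m))) (hV₁ : V₁ ∈ α) :
    (∀ i, 1 ≤ i → i ≤ m / 2 →
      {Pt | IsHalfPartition m Pt ∧ ∃ W ∈ Pt, (V₁ ∩ W).card = i}.ncard *
          2 ^ ((2 * i) / m) = (Nat.choose m i) ^ 2) ∧
    (∀ β γ : Finset (Finset (Fin (2 * m))),
      IsHalfPartition m β → IsHalfPartition m γ →
      ((∃ g : Equiv.Perm (Fin (2 * m)),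
          α.image (fun V => V.image g) = α ∧ β.image (fun V => V.image g) = γ) ↔
        ∃ j, (∃ W ∈ β, (V₁ ∩ W).card = j) ∧ ∃ W ∈ γ, (V₁ ∩ W).card = j)) ∧
    {S : Set (Finset (Finset (Fin (2 * m)))) |
      ∃ β, IsHalfPartition m β ∧
        S = {γ | IsHalfPartition m γ ∧ ∃ g : Equiv.Perm (Fin (2 * m)),
          α.image (fun V => V.image g) = α ∧ β.image (fun V => V.image g) = γ}}.ncard
      = m / 2 + 1 := by
  have hm₀ : 0 < m := by omega
  have hV₁m : #V₁ = m := hα.2.1 V₁ hV₁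
  refine ⟨fun i _ hi => ncard_delta_mul hm₀ hV₁m (by omega),
    fun β γ hβ hγ => exists_perm_iff_exists_card_inter_eq hα hV₁ hβ hγ, ?_⟩
  calc _ = (delta V₁ '' Set.Iic (m / 2)).ncard :=
        congrArg Set.ncard (setOf_stabilizerOrbit_eq_image_delta hm₀ hα hV₁)
    _ = m / 2 + 1 := by
      rw [(delta_injOn hm₀ hV₁m).ncard_image, ← coe_Iic, Set.ncard_coe_finset,
        Nat.card_Iic]
end

section
/- For all integers m and ℓ with either (m ≥ 21 and 2 ≤ ℓ ≤ 20) or (m ≥ 2 and ℓ ≥ 21), one has (mℓ)!/(m!^ℓ · ℓ!) > (mℓ)^6 / 9. Equivalently, the function f(m,ℓ) = 9·(mℓ)!/(m!^ℓ · ℓ! · (mℓ)^6) satisfies f(m,ℓ) > 1 whenever (m ≥ 21 and 2 ≤ ℓ ≤ 20) or (m ≥ 2 and ℓ ≥ 21). -/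
open Nat

private lemma pcl_base1 : (2*21)^6 * (Nat.factorial 2)^21 * Nat.factorial 21 < 9 * Nat.factorial (2*21) := by
  decide

private lemma pcl_base2 : (21*2)^6 * (Nat.factorial 21)^2 * Nat.factorial 2 < 9 * Nat.factorial (21*2) := by
  decide

/-- `m! * ℓ^m ≤ (m*ℓ+1)^m`. -/
private lemma pcl_aux (ℓ : ℕ) : ∀ m : ℕ, Nat.factorial m * ℓ^m ≤ (m*ℓ+1)^m := by
  intro m
  induction m with
  | zero => simp
  | succ m ih =>
    calc Nat.factorial (m+1) * ℓ^(m+1)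
        = (Nat.factorial m * ℓ^m) * ((m+1)*ℓ) := by rw [Nat.factorial_succ]; ring
      _ ≤ (m*ℓ+1)^m * ((m+1)*ℓ+1) := Nat.mul_le_mul ih (Nat.le_succ _)
      _ ≤ ((m+1)*ℓ+1)^m * ((m+1)*ℓ+1) := by
          apply Nat.mul_le_mul_right
          apply Nat.pow_le_pow_left
          have : m*ℓ ≤ (m+1)*ℓ := Nat.mul_le_mul_right ℓ (Nat.le_succ m)
          omega
      _ = ((m+1)*ℓ+1)^(m+1) := rfl

/-- step in m -/
private lemma pcl_stepM (m ℓ : ℕ)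
    (hcond : (m+1)^(ℓ+6) ≤ m^6 * (m*ℓ+1)^ℓ)
    (h : (m*ℓ)^6 * (Nat.factorial m)^ℓ * Nat.factorial ℓ < 9 * Nat.factorial (m*ℓ)) :
    ((m+1)*ℓ)^6 * (Nat.factorial (m+1))^ℓ * Nat.factorial ℓ < 9 * Nat.factorial ((m+1)*ℓ) := by
  have h2 : Nat.factorial (m*ℓ) * (m*ℓ+1)^ℓ ≤ Nat.factorial ((m+1)*ℓ) := by
    have := Nat.factorial_mul_pow_le_factorial (m := m*ℓ) (n := ℓ)
    have e : m*ℓ + ℓ = (m+1)*ℓ := by ring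
    rwa [e] at this
  have hK : (0:ℕ) < m^6 * (m*ℓ+1)^ℓ := by
    rcases Nat.eq_zero_or_pos m with hm0 | hm0
    · subst hm0; simp at hcond
    · positivity
  have key : (((m+1)*ℓ)^6 * (Nat.factorial (m+1))^ℓ * Nat.factorial ℓ) * m^6
      < (9 * Nat.factorial ((m+1)*ℓ)) * m^6 := by
    calc (((m+1)*ℓ)^6 * (Nat.factorial (m+1))^ℓ * Nat.factorial ℓ) * m^6
        = ((m+1)^(ℓ+6)) * ((m*ℓ)^6 * (Nat.factorial m)^ℓ * Nat.factorial ℓ) := by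
          simp only [Nat.factorial_succ, mul_pow, pow_add]; ring
      _ ≤ (m^6 * (m*ℓ+1)^ℓ) * ((m*ℓ)^6 * (Nat.factorial m)^ℓ * Nat.factorial ℓ) :=
          Nat.mul_le_mul_right _ hcond
      _ < (m^6 * (m*ℓ+1)^ℓ) * (9 * Nat.factorial (m*ℓ)) := mul_lt_mul_of_pos_left h hK
      _ = (9 * (Nat.factorial (m*ℓ) * (m*ℓ+1)^ℓ)) * m^6 := by ring
      _ ≤ (9 * Nat.factorial ((m+1)*ℓ)) * m^6 :=
          Nat.mul_le_mul_right _ (Nat.mul_le_mul_left 9 h2)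
  exact Nat.lt_of_mul_lt_mul_right key

/-- step in ℓ -/
private lemma pcl_stepL (m ℓ : ℕ) (hℓ : 1 ≤ ℓ)
    (hcond : (ℓ+1)^7 ≤ ℓ^(m+6))
    (h : (m*ℓ)^6 * (Nat.factorial m)^ℓ * Nat.factorial ℓ < 9 * Nat.factorial (m*ℓ)) :
    (m*(ℓ+1))^6 * (Nat.factorial m)^(ℓ+1) * Nat.factorial (ℓ+1) < 9 * Nat.factorial (m*(ℓ+1)) := by
  have h2 : Nat.factorial (m*ℓ) * (m*ℓ+1)^m ≤ Nat.factorial (m*(ℓ+1)) := by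
    have := Nat.factorial_mul_pow_le_factorial (m := m*ℓ) (n := m)
    have e : m*ℓ + m = m*(ℓ+1) := by ring
    rwa [e] at this
  have hL : Nat.factorial m * ℓ^m ≤ (m*ℓ+1)^m := pcl_aux ℓ m
  have hK : (0:ℕ) < ℓ^(m+6) * (m*ℓ+1)^m := by positivity
  have key : ((m*(ℓ+1))^6 * (Nat.factorial m)^(ℓ+1) * Nat.factorial (ℓ+1)) * ℓ^(m+6)
      < (9 * Nat.factorial (m*(ℓ+1))) * ℓ^(m+6) := by
    calc ((m*(ℓ+1))^6 * (Nat.factorial m)^(ℓ+1) * Nat.factorial (ℓ+1)) * ℓ^(m+6)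
        = ((ℓ+1)^7 * (Nat.factorial m * ℓ^m)) * (m^6 * (Nat.factorial m)^ℓ * Nat.factorial ℓ * ℓ^6) := by
          simp only [Nat.factorial_succ, mul_pow, pow_add, pow_succ]; ring
      _ ≤ (ℓ^(m+6) * (m*ℓ+1)^m) * (m^6 * (Nat.factorial m)^ℓ * Nat.factorial ℓ * ℓ^6) :=
          Nat.mul_le_mul_right _ (Nat.mul_le_mul hcond hL)
      _ = (ℓ^(m+6) * (m*ℓ+1)^m) * ((m*ℓ)^6 * (Nat.factorial m)^ℓ * Nat.factorial ℓ) := by ring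
      _ < (ℓ^(m+6) * (m*ℓ+1)^m) * (9 * Nat.factorial (m*ℓ)) := mul_lt_mul_of_pos_left h hK
      _ = (9 * (Nat.factorial (m*ℓ) * (m*ℓ+1)^m)) * ℓ^(m+6) := by ring
      _ ≤ (9 * Nat.factorial (m*(ℓ+1))) * ℓ^(m+6) :=
          Nat.mul_le_mul_right _ (Nat.mul_le_mul_left 9 h2)
  exact Nat.lt_of_mul_lt_mul_right key

/-- If `(m ≥ 21 and 2 ≤ ℓ ≤ 20)` or `(m ≥ 2 and ℓ ≥ 21)`, then
`(mℓ)!/(m!^ℓ · ℓ!) > (mℓ)^6/9`, stated multiplicatively. -/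
theorem partition_count_large
    (m ℓ : ℕ)
    (h : (21 ≤ m ∧ 2 ≤ ℓ ∧ ℓ ≤ 20) ∨ (2 ≤ m ∧ 21 ≤ ℓ)) :
    (m * ℓ) ^ 6 * (Nat.factorial m) ^ ℓ * Nat.factorial ℓ <
      9 * Nat.factorial (m * ℓ) := by
  rcases h with ⟨hm, hℓ2, _⟩ | ⟨hm, hℓ⟩
  · -- region: m ≥ 21, ℓ ≥ 2
    have row : ∀ l : ℕ, 2 ≤ l →
        (21 * l)^6 * (Nat.factorial 21)^l * Nat.factorial l < 9 * Nat.factorial (21*l) := by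
      intro l hl
      induction l, hl using Nat.le_induction with
      | base => exact pcl_base2
      | succ l hl ih =>
        apply pcl_stepL 21 l (by omega)
        · -- (l+1)^7 ≤ l^27
          calc (l+1)^7 ≤ (2*l)^7 := by apply Nat.pow_le_pow_left; omega
            _ = 2^7 * l^7 := by ring
            _ ≤ l^20 * l^7 := by
                apply Nat.mul_le_mul_right
                calc (2:ℕ)^7 ≤ 2^20 := Nat.pow_le_pow_right (by norm_num) (by norm_num)
                  _ ≤ l^20 := Nat.pow_le_pow_left hl _
            _ = l^(21+6) := by ring
        · exact ih
    induction m, hm using Nat.le_induction with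
    | base => exact row ℓ hℓ2
    | succ m hm ih =>
      apply pcl_stepM m ℓ
      · -- (m+1)^(ℓ+6) ≤ m^6 * (m*ℓ+1)^ℓ, for m ≥ 21, ℓ ≥ 2
        have h1 : (m+1)^4 ≤ 2*m^4 := by
          have h21 : (21*(m+1))^4 ≤ (22*m)^4 := by apply Nat.pow_le_pow_left; omega
          have h22 : 21^4 * (m+1)^4 ≤ 21^4 * (2*m^4) := by
            calc 21^4 * (m+1)^4 = (21*(m+1))^4 := by rw [mul_pow]
              _ ≤ (22*m)^4 := h21
              _ = 22^4 * m^4 := by rw [mul_pow]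
              _ ≤ 21^4 * (2*m^4) := by rw [← mul_assoc]; apply Nat.mul_le_mul_right; norm_num
          exact Nat.le_of_mul_le_mul_left h22 (by norm_num)
        have h2 : 4*m^2 ≤ (m*ℓ+1)^2 := by
          have t : m*2 ≤ m*ℓ := Nat.mul_le_mul_left m hℓ2
          calc 4*m^2 = (2*m)^2 := by ring
            _ ≤ (m*ℓ+1)^2 := by apply Nat.pow_le_pow_left; omega
        have h48 : (m+1)^8 ≤ m^6 * (m*ℓ+1)^2 := by
          calc (m+1)^8 = ((m+1)^4)^2 := by ring
            _ ≤ (2*m^4)^2 := Nat.pow_le_pow_left h1 2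
            _ = m^6 * (4*m^2) := by ring
            _ ≤ m^6 * (m*ℓ+1)^2 := Nat.mul_le_mul_left _ h2
        have e : ℓ + 6 = (ℓ-2) + 8 := by omega
        have e2 : (ℓ-2) + 2 = ℓ := by omega
        calc (m+1)^(ℓ+6) = (m+1)^(ℓ-2) * (m+1)^8 := by rw [e, pow_add]
          _ ≤ (m*ℓ+1)^(ℓ-2) * (m^6 * (m*ℓ+1)^2) := by
              apply Nat.mul_le_mul _ h48
              apply Nat.pow_le_pow_left
              have t : m*1 ≤ m*ℓ := Nat.mul_le_mul_left m (by omega)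
              omega
          _ = m^6 * ((m*ℓ+1)^((ℓ-2)+2)) := by rw [pow_add]; ring
          _ = m^6 * (m*ℓ+1)^ℓ := by rw [e2]
      · exact ih
  · -- region: m ≥ 2, ℓ ≥ 21
    have row : ∀ l : ℕ, 21 ≤ l →
        (2 * l)^6 * (Nat.factorial 2)^l * Nat.factorial l < 9 * Nat.factorial (2*l) := by
      intro l hl
      induction l, hl using Nat.le_induction with
      | base => exact pcl_base1
      | succ l hl ih =>
        apply pcl_stepL 2 l (by omega)
        · -- (l+1)^7 ≤ l^8 for l ≥ 21
          have h2 : 21^7 * (l+1)^7 ≤ 22^7 * l^7 := by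
            calc 21^7 * (l+1)^7 = (21*(l+1))^7 := by rw [mul_pow]
              _ ≤ (22*l)^7 := by apply Nat.pow_le_pow_left; omega
              _ = 22^7 * l^7 := by rw [mul_pow]
          have h3 : 22^7 * l^7 ≤ 21^7 * l^8 := by
            calc 22^7 * l^7 ≤ 21^7 * 21 * l^7 :=
                  Nat.mul_le_mul_right _ (by norm_num)
              _ ≤ 21^7 * l * l^7 := Nat.mul_le_mul_right _ (Nat.mul_le_mul_left _ hl)
              _ = 21^7 * l^8 := by ring
          exact Nat.le_of_mul_le_mul_left (le_trans h2 h3) (by norm_num)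
        · exact ih
    induction m, hm using Nat.le_induction with
    | base => exact row ℓ hℓ
    | succ m hm ih =>
      apply pcl_stepM m ℓ
      · -- (m+1)^(ℓ+6) ≤ m^6 * (m*ℓ+1)^ℓ for m ≥ 2, ℓ ≥ 21
        have t : m*21 ≤ m*ℓ := Nat.mul_le_mul_left m hℓ
        have h2m : 2*(m+1) ≤ m*ℓ+1 := by omega
        calc (m+1)^(ℓ+6) = (m+1)^6 * (m+1)^ℓ := by rw [pow_add]; ring
          _ ≤ (2*m)^6 * (m+1)^ℓ := by
              apply Nat.mul_le_mul_right
              apply Nat.pow_le_pow_left; omega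
          _ = m^6 * (2^6 * (m+1)^ℓ) := by ring
          _ ≤ m^6 * (2^ℓ * (m+1)^ℓ) := by
              apply Nat.mul_le_mul_left
              exact Nat.mul_le_mul_right _ (Nat.pow_le_pow_right (by norm_num) (by omega))
          _ = m^6 * (2*(m+1))^ℓ := by rw [mul_pow]
          _ ≤ m^6 * (m*ℓ+1)^ℓ := Nat.mul_le_mul_left _ (Nat.pow_le_pow_left h2m ℓ)
      · exact ih
end
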